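/- arXiv:2411.11842 — 7 statements merged into one kernel-verified Lean document; each statement's English description precedes it below -/
import Mathlib

section
/- For all l, m, n ∈ ℕ there is a constant f(l,m,n) ∈ ℕ with the following property: for every set U with |U| ≥ f(l,m,n), every non-empty set F with |F| ≤ l, and every map Φ from the m-element subsets of U to F, there exist i ∈ F and an n-element subset Z of U such that Φ(X) = i for all m-element subsets X of Z. -/
open SimpleGraph

universe u v

/-- No edge of `G` joins `X` and `Y`. -/
def NoEdges {V : Type u} (G : SimpleGraph V) (X Y : Set V) : Prop :=
  ∀ ⦃x⦄, x ∈ X → ∀ ⦃y⦄, y ∈ Y → ¬ G.Adj x y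

/-- `X` and `Y` are anticomplete: disjoint with no edges between them. -/
def Anticomplete {V : Type u} (G : SimpleGraph V) (X Y : Set V) : Prop :=
  Disjoint X Y ∧ NoEdges G X Y

/-- A stable (independent) set. -/
def IsStableSet {V : Type u} (G : SimpleGraph V) (S : Set V) : Prop :=
  S.Pairwise fun x y => ¬ G.Adj x y

/-- Some edge of `G` joins `X` and `Y`. -/
def Touches {V : Type u} (G : SimpleGraph V) (X Y : Set V) : Prop :=
  ∃ x ∈ X, ∃ y ∈ Y, G.Adj x y

/-- `P` induces a (nonempty) path in `G`. -/
def IsInducedPath {V : Type u} (G : SimpleGraph V) (P : Set V) : Prop :=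
  ∃ n : ℕ, 0 < n ∧ Nonempty (G.induce P ≃g pathGraph n)

/-- A `μ`-model in `G`: pairwise disjoint connected induced subgraphs, pairwise joined. -/
def IsCompleteModel {V : Type u} (G : SimpleGraph V) {μ : ℕ} (C : Fin μ → Set V) : Prop :=
  (∀ i, (G.induce (C i)).Connected) ∧
  (Pairwise fun i j => Disjoint (C i) (C j)) ∧
  Pairwise fun i j => Touches G (C i) (C j)

/-- All branch sets are induced paths. -/
def IsLinearFamily {V : Type u} (G : SimpleGraph V) {μ : ℕ} (C : Fin μ → Set V) : Prop :=
  ∀ i, IsInducedPath G (C i)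

/-- A `(ρ,σ)`-model in `G`. -/
def IsBipModel {V : Type u} (G : SimpleGraph V) {ρ σ : ℕ}
    (A : Fin ρ → Set V) (B : Fin σ → Set V) : Prop :=
  (∀ i, (G.induce (A i)).Connected) ∧ (∀ j, (G.induce (B j)).Connected) ∧
  (Pairwise fun i j => Disjoint (A i) (A j)) ∧
  (Pairwise fun i j => Disjoint (B i) (B j)) ∧
  (∀ i j, Disjoint (A i) (B j)) ∧
  ∀ i j, Touches G (A i) (B j)

/-- The family `A` is pairwise anticomplete. -/
def FamilyInduced {V : Type u} (G : SimpleGraph V) {ρ : ℕ} (A : Fin ρ → Set V) : Prop :=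
  Pairwise fun i j => NoEdges G (A i) (A j)

/-- `H` is a minor of `G`, via a minor model. -/
def IsMinorOf {W : Type v} {V : Type u} (H : SimpleGraph W) (G : SimpleGraph V) : Prop :=
  ∃ φ : W → Set V,
    (∀ w, (G.induce (φ w)).Connected) ∧
    (Pairwise fun w w' => Disjoint (φ w) (φ w')) ∧
    ∀ ⦃w w'⦄, H.Adj w w' → Touches G (φ w) (φ w')

/-- `H` is an induced minor of `G`. -/
def IsInducedMinorOf {W : Type v} {V : Type u} (H : SimpleGraph W) (G : SimpleGraph V) : Prop :=
  ∃ φ : W → Set V,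
    (∀ w, (G.induce (φ w)).Connected) ∧
    (Pairwise fun w w' => Disjoint (φ w) (φ w')) ∧
    (∀ ⦃w w'⦄, H.Adj w w' → Touches G (φ w) (φ w')) ∧
    ∀ ⦃w w'⦄, w ≠ w' → ¬ H.Adj w w' → NoEdges G (φ w) (φ w')

/-- `G` has a tree decomposition of width at most `k`. -/
def TreewidthAtMost {V : Type u} (G : SimpleGraph V) (k : ℕ) : Prop :=
  ∃ (ι : Type u) (T : SimpleGraph ι) (bag : ι → Set V),
    T.IsTree ∧
    (∀ x : V, ∃ i, x ∈ bag i) ∧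
    (∀ ⦃x y⦄, G.Adj x y → ∃ i, x ∈ bag i ∧ y ∈ bag i) ∧
    (∀ x : V, (T.induce {i | x ∈ bag i}).Connected) ∧
    ∀ i, (bag i).Finite ∧ (bag i).ncard ≤ k + 1

/-- A subdivision model: `G` is obtained from `H` by replacing edges with
internally disjoint paths. -/
def IsSubdivisionModel {W : Type v} {V : Type u} (H : SimpleGraph W) (G : SimpleGraph V)
    (f : W → V) (P : ∀ ⦃a b : W⦄, H.Adj a b → G.Walk (f a) (f b)) : Prop :=
  Function.Injective f ∧
  (∀ ⦃a b⦄ (h : H.Adj a b), (P h).IsPath) ∧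
  (∀ ⦃a b⦄ (h : H.Adj a b), P h.symm = (P h).reverse) ∧
  (∀ ⦃a b⦄ (h : H.Adj a b) (x : V), x ∈ (P h).support → x ∈ Set.range f →
      x = f a ∨ x = f b) ∧
  (∀ ⦃a b⦄ (h : H.Adj a b) ⦃a' b'⦄ (h' : H.Adj a' b'), s(a, b) ≠ s(a', b') →
      ∀ x, x ∈ (P h).support → x ∈ (P h').support → x ∈ Set.range f) ∧
  (∀ x : V, x ∈ Set.range f ∨ ∃ a b, ∃ h : H.Adj a b, x ∈ (P h).support) ∧
  ∀ e ∈ G.edgeSet, ∃ a b, ∃ h : H.Adj a b, e ∈ (P h).edges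

/-- `G` is (isomorphic to) a subdivision of `H`. -/
def IsSubdivisionOf {W : Type v} {V : Type u} (H : SimpleGraph W) (G : SimpleGraph V) : Prop :=
  ∃ f P, IsSubdivisionModel H G f P

/-- `G` is a proper subdivision of `H`: every edge is subdivided at least once. -/
def IsProperSubdivisionOf {W : Type v} {V : Type u} (H : SimpleGraph W) (G : SimpleGraph V) : Prop :=
  ∃ f P, IsSubdivisionModel H G f P ∧ ∀ ⦃a b⦄ (h : H.Adj a b), 2 ≤ (P h).length

/-- The `r`-by-`r` wall (hexagonal grid / brick wall). -/
def wallGraph (r : ℕ) : SimpleGraph (Fin r × Fin (2 * r)) :=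
  SimpleGraph.fromRel fun p q =>
    (p.1 = q.1 ∧ p.2.val + 1 = q.2.val) ∨
    (p.2 = q.2 ∧ p.1.val + 1 = q.1.val ∧ (p.1.val + p.2.val) % 2 = 0)

/-- `R` is an induced path in `G` (as a walk). -/
def IsPathIn {V : Type u} (G : SimpleGraph V) {x y : V} (R : G.Walk x y) : Prop :=
  R.IsPath ∧ IsInducedPath G {z | z ∈ R.support}

/-- The interior of a walk from `x` to `y`. -/
def interiorSet {V : Type u} (G : SimpleGraph V) {x y : V} (R : G.Walk x y) : Set V :=
  {z | z ∈ R.support ∧ z ≠ x ∧ z ≠ y}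

/-- An `s`-constellation `(S, L)` in `G` (with `V(G) = S ∪ L`). -/
def IsConstellation {V : Type u} (G : SimpleGraph V) (S L : Set V) (s : ℕ) : Prop :=
  S ∪ L = Set.univ ∧ Disjoint S L ∧ IsInducedPath G L ∧ IsStableSet G S ∧
  S.Finite ∧ S.ncard = s ∧ ∀ x ∈ S, ∃ z ∈ L, G.Adj x z

/-- Ample: no two vertices of `S` have a common neighbor in `L`. -/
def IsAmple {V : Type u} (G : SimpleGraph V) (S L : Set V) : Prop :=
  ∀ ⦃x⦄, x ∈ S → ∀ ⦃y⦄, y ∈ S → x ≠ y → ∀ ⦃z⦄, z ∈ L → ¬ (G.Adj x z ∧ G.Adj y z)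

/-- Interrupted: an enumeration of `S` such that later vertices meet the interior of
every route between earlier vertices. -/
def IsInterrupted {V : Type u} (G : SimpleGraph V) (S L : Set V) (s : ℕ) : Prop :=
  ∃ x : Fin s → V, Function.Injective x ∧ Set.range x = S ∧
    ∀ ⦃i j k : Fin s⦄, i < j → j < k →
      ∀ (R : G.Walk (x i) (x j)), IsPathIn G R → interiorSet G R ⊆ L →
        ∃ z ∈ interiorSet G R, G.Adj (x k) z

/-- An `(s,l)`-constellation in `G` with stable set `S` (and `V(G) = S ∪ paths`). -/
def IsSLConstellation {V : Type u} (G : SimpleGraph V) (S : Set V) (s l : ℕ) : Prop :=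
  IsStableSet G S ∧ S.Finite ∧ S.ncard = s ∧
  Nat.card (G.induce Sᶜ).ConnectedComponent = l ∧
  (∀ C : (G.induce Sᶜ).ConnectedComponent, IsInducedPath G (Subtype.val '' C.supp)) ∧
  ∀ x ∈ S, ∀ C : (G.induce Sᶜ).ConnectedComponent, ∃ z ∈ Subtype.val '' C.supp, G.Adj x z

/-- A route of the constellation: an induced path with distinct ends in `S` and
interior outside `S`. -/
def IsRoute {V : Type u} (G : SimpleGraph V) (S : Set V) {x y : V} (R : G.Walk x y) : Prop :=
  x ∈ S ∧ y ∈ S ∧ x ≠ y ∧ IsPathIn G R ∧ interiorSet G R ⊆ Sᶜ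

/-- Ample `(s,l)`-constellation: no route of length at most `2`. -/
def IsSLAmple {V : Type u} (G : SimpleGraph V) (S : Set V) : Prop :=
  ∀ ⦃x y : V⦄ (R : G.Walk x y), IsRoute G S R → 2 < R.length

/-- `q`-zigzagged. -/
def IsZigzagged {V : Type u} (G : SimpleGraph V) (S : Set V) (q : ℕ) : Prop :=
  ∃ e : V → ℕ, Set.InjOn e S ∧
    ∀ ⦃x⦄, x ∈ S → ∀ ⦃y⦄, y ∈ S → e x < e y →
      ∀ (R : G.Walk x y), IsRoute G S R →
        ({z | z ∈ S ∧ e x < e z ∧ e z < e y ∧ ¬ ∃ w ∈ R.support, G.Adj z w}).ncard < q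

/-- A strong `(k,l)`-block `(B, Q)` in `G`. -/
def IsStrongBlock {V : Type u} (G : SimpleGraph V) (k l : ℕ) (B : Set V)
    (Q : (x : V) → (y : V) → Set (G.Walk x y)) : Prop :=
  B.Finite ∧ k ≤ B.ncard ∧
  (∀ x ∈ B, ∀ y ∈ B, x ≠ y →
    (∃ s : Finset (G.Walk x y), ↑s ⊆ Q x y ∧ l ≤ s.card) ∧
    (∀ W ∈ Q x y, IsPathIn G W) ∧
    (∀ W ∈ Q x y, ∀ W' ∈ Q x y, W ≠ W' →
      ∀ z, z ∈ SimpleGraph.Walk.support W → z ∈ SimpleGraph.Walk.support W' →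
        z = x ∨ z = y)) ∧
  ∀ x ∈ B, ∀ y ∈ B, x ≠ y → ∀ x' ∈ B, ∀ y' ∈ B, x' ≠ y' → s(x, y) ≠ s(x', y') →
    ∀ W ∈ Q x y, ∀ W' ∈ Q x' y',
      ∀ z, z ∈ SimpleGraph.Walk.support W → z ∈ SimpleGraph.Walk.support W' →
        z ∈ ({x, y} ∩ {x', y'} : Set V)

/-- A `(α,1)`-model with path side `B` is `A`-aligned. -/
def AAlignedSingle {V : Type u} (G : SimpleGraph V) {α : ℕ}
    (A : Fin α → Set V) (B : Set V) : Prop :=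
  ∃ (n : ℕ) (e : G.induce B ≃g pathGraph n) (l r : Fin α → ℕ),
    (∀ i, l i ≤ r i) ∧ (∀ i j, i < j → r i < l j) ∧
    ∀ i (x : B), (∃ a ∈ A i, G.Adj ↑x a) → l i ≤ (e x).val ∧ (e x).val ≤ r i

/-! Erdős–Rado: by induction on `m`. Greedily pick `a₀ ∈ U`, apply the `m`-case to the
coloring `X ↦ c (insert a₀ X)` on the rest, and continue inside the monochromatic set found.
This yields a long sequence `a₀, a₁, …` in which the color of an `(m+1)`-set depends only on
its first element; pigeonholing these first-element colors gives the monochromatic set. -/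

namespace HypergraphRamsey

variable {α β : Type*}

def IsMonochromatic (c : Finset α → β) (m : ℕ) (Z : Finset α) (i : β) : Prop :=
  ∀ X ⊆ Z, X.card = m → c X = i

variable [DecidableEq α]

def IsEndHomogeneous (c : Finset α → β) (m : ℕ) (F : Finset β) : List α → Prop
  | [] => True
  | a :: L =>
    (∃ i ∈ F, IsMonochromatic (fun X => c (insert a X)) m L.toFinset i) ∧
      IsEndHomogeneous c m F L

theorem IsEndHomogeneous.exists_vertexColor {c : Finset α → β} {m : ℕ} {F : Finset β} :
    ∀ {L : List α}, IsEndHomogeneous c m F L →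
      ∃ d : α → β, (∀ a ∈ L, d a ∈ F) ∧
        ∀ X ⊆ L.toFinset, X.card = m + 1 → ∃ a ∈ X, c X = d a
  | [], _ => ⟨fun _ => c ∅, by simp, fun X hX hXm => by
      simp_all [Finset.subset_empty]⟩
  | a :: L, ⟨⟨i, hiF, hi⟩, hL⟩ => by
    obtain ⟨d, hdF, hd⟩ := hL.exists_vertexColor
    refine ⟨Function.update d a i, ?_, fun X hX hXm => ?_⟩
    · intro b hb
      rcases eq_or_ne b a with rfl | hba
      · simpa using hiF
      · simpa [hba] using hdF b (List.mem_of_ne_of_mem hba hb)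
    by_cases haX : a ∈ X
    · refine ⟨a, haX, ?_⟩
      have hrest : X.erase a ⊆ L.toFinset := by
        intro x hx
        have := hX (Finset.mem_of_mem_erase hx)
        simp_all
      rw [Function.update_self, ← Finset.insert_erase haX]
      exact hi _ hrest (by simp [haX, hXm])
    · have hXL : X ⊆ L.toFinset := fun x hx => by
        have := hX hx
        simp_all [ne_of_mem_of_not_mem hx haX]
      obtain ⟨b, hbX, hcb⟩ := hd X hXL hXm
      exact ⟨b, hbX, by rw [hcb, Function.update_of_ne (ne_of_mem_of_not_mem hbX haX)]⟩

/-- How large `U` must be to contain an end-homogeneous list of length `t`, when `R k`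
elements force a monochromatic `k`-set for `m`-sets. -/
def endHomogeneousBound (R : ℕ → ℕ) : ℕ → ℕ
  | 0 => 0
  | t + 1 => R (endHomogeneousBound R t) + 1

def ramseyBound (l : ℕ) : ℕ → ℕ → ℕ
  | 0, k => k
  | m + 1, k => endHomogeneousBound (ramseyBound l m) (l * k)

theorem exists_isEndHomogeneous {m : ℕ} {F : Finset β} {R : ℕ → ℕ}
    (hR : ∀ (k : ℕ) (U : Finset α) (c : Finset α → β), R k ≤ U.card →
      (∀ X ⊆ U, X.card = m → c X ∈ F) →
        ∃ i ∈ F, ∃ Z ⊆ U, Z.card = k ∧ IsMonochromatic c m Z i)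
    (c : Finset α → β) :
    ∀ (t : ℕ) (U : Finset α), endHomogeneousBound R t ≤ U.card →
      (∀ X ⊆ U, X.card = m + 1 → c X ∈ F) →
      ∃ L : List α, L.toFinset.card = t ∧ L.toFinset ⊆ U ∧ IsEndHomogeneous c m F L
  | 0, _, _, _ => ⟨[], rfl, by simp, trivial⟩
  | t + 1, U, hU, hc => by
    simp only [endHomogeneousBound] at hU
    obtain ⟨a, haU⟩ : U.Nonempty := Finset.card_pos.mp (by omega)
    have hUa : R (endHomogeneousBound R t) ≤ (U.erase a).card := by
      rw [Finset.card_erase_of_mem haU]; omega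
    have hca : ∀ X ⊆ U.erase a, X.card = m → c (insert a X) ∈ F := fun X hX hXm => by
      have haX : a ∉ X := fun h => by simpa using hX h
      refine hc _ (Finset.insert_subset haU (hX.trans (Finset.erase_subset a U))) ?_
      rw [Finset.card_insert_of_notMem haX, hXm]
    obtain ⟨i, hiF, Z, hZU, hZcard, hZ⟩ := hR _ _ _ hUa hca
    have hcZ : ∀ X ⊆ Z, X.card = m + 1 → c X ∈ F :=
      fun X hX => hc X (hX.trans (hZU.trans (Finset.erase_subset a U)))
    obtain ⟨L, hLcard, hLZ, hL⟩ :=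
      exists_isEndHomogeneous hR c t Z hZcard.ge hcZ
    have haL : a ∉ L.toFinset := fun h => by simpa using hZU (hLZ h)
    refine ⟨a :: L, ?_, ?_, ⟨i, hiF, fun X hX => hZ X (hX.trans hLZ)⟩, hL⟩
    · rw [List.toFinset_cons, Finset.card_insert_of_notMem haL, hLcard]
    · rw [List.toFinset_cons]
      exact Finset.insert_subset haU (hLZ.trans (hZU.trans (Finset.erase_subset a U)))

theorem exists_isMonochromatic {l : ℕ} {F : Finset β} (hF : F.Nonempty) (hFl : F.card ≤ l) :
    ∀ (m k : ℕ) (U : Finset α) (c : Finset α → β), ramseyBound l m k ≤ U.card →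
      (∀ X ⊆ U, X.card = m → c X ∈ F) →
        ∃ i ∈ F, ∃ Z ⊆ U, Z.card = k ∧ IsMonochromatic c m Z i
  | 0, k, U, c, hU, hc => by
    obtain ⟨Z, hZU, hZcard⟩ := U.exists_subset_card_eq hU
    refine ⟨c ∅, hc ∅ (Finset.empty_subset U) rfl, Z, hZU, hZcard, fun X _ hX => ?_⟩
    rw [Finset.card_eq_zero.mp hX]
  | m + 1, k, U, c, hU, hc => by
    classical
    obtain ⟨L, hLcard, hLU, hL⟩ :=
      exists_isEndHomogeneous (exists_isMonochromatic hF hFl m) c (l * k) U hU hc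
    obtain ⟨d, hdF, hd⟩ := hL.exists_vertexColor
    obtain ⟨i, hiF, hik⟩ := Finset.exists_le_card_fiber_of_mul_le_card_of_maps_to
      (s := L.toFinset) (n := k) (fun a ha => hdF a (List.mem_toFinset.mp ha)) hF
      (by rw [hLcard]; exact Nat.mul_le_mul_right k hFl)
    obtain ⟨Z, hZ, hZcard⟩ := Finset.exists_subset_card_eq hik
    have hZL : Z ⊆ L.toFinset := hZ.trans (Finset.filter_subset _ _)
    refine ⟨i, hiF, Z, hZL.trans hLU, hZcard, fun X hXZ hXm => ?_⟩
    obtain ⟨a, haX, hca⟩ := hd X (hXZ.trans hZL) hXm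
    rw [hca, (Finset.mem_filter.mp (hZ (hXZ haX))).2]

end HypergraphRamsey

theorem stmt_3_general (l m n : ℕ) :
    ∃ f : ℕ, ∀ (α : Type u) (β : Type v) (U : Finset α) (F : Finset β)
      (Φ : Finset α → β),
      f ≤ U.card → F.Nonempty → F.card ≤ l →
      (∀ X ⊆ U, X.card = m → Φ X ∈ F) →
      ∃ i ∈ F, ∃ Z ⊆ U, Z.card = n ∧ ∀ X ⊆ Z, X.card = m → Φ X = i := by
  classical
  exact ⟨HypergraphRamsey.ramseyBound l m n, fun _ _ U _ Φ hU hF hFl hΦ =>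
    HypergraphRamsey.exists_isMonochromatic hF hFl m n U Φ hU hΦ⟩

theorem stmt_3 (l m n : ℕ) (hl : 1 ≤ l) (hm : 1 ≤ m) (hn : 1 ≤ n) :
    ∃ f : ℕ, ∀ (α : Type u) (β : Type v) (U : Finset α) (F : Finset β)
      (Φ : Finset α → β),
      f ≤ U.card → F.Nonempty → F.card ≤ l →
      (∀ X ⊆ U, X.card = m → Φ X ∈ F) →
      ∃ i ∈ F, ∃ Z ⊆ U, Z.card = n ∧ ∀ X ⊆ Z, X.card = m → Φ X = i :=
  stmt_3_general l m n
end

section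
/- For all n, q, r ∈ ℕ there is a constant f(n,q,r) ∈ ℕ with the following property: for all sets U_1, …, U_n each of cardinality at least f(n,q,r), every non-empty set W with |W| ≤ r, and every map Φ : U_1 × ⋯ × U_n → W, there exist i ∈ W and q-element subsets Z_j ⊆ U_j for each j ∈ {1,…,n} such that Φ(z) = i for every z ∈ Z_1 × ⋯ × Z_n. -/
open SimpleGraph

universe u v

/-! Induction on `n`. Shrink `U₁, …, Uₙ` to sets of size `f(n)` and colour each `u ∈ U₀` by the
colouring `Φ(u, ·)` it induces on their product. There are at most `r ^ f(n) ^ n` such colourings,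
so once `|U₀| > r ^ f(n) ^ n * (q - 1)` the pigeonhole principle gives `q` elements of `U₀` that
induce the same colouring, and the induction hypothesis applied to that colouring supplies the
other `q`-sets. -/

open Finset Fintype

theorem Finset.exists_subset_card_eq_forall_eq_of_mul_lt_card {α γ : Type*}
    {s : Finset α} {t : Finset γ} {g : α → γ} {q : ℕ} (hg : ∀ a ∈ s, g a ∈ t)
    (hst : #t * (q - 1) < #s) :
    ∃ a₀ ∈ s, ∃ Z ⊆ s, #Z = q ∧ ∀ a ∈ Z, g a = g a₀ := by
  classical
  obtain ⟨y, -, hfiber⟩ := exists_lt_card_fiber_of_mul_lt_card_of_maps_to hg hst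
  obtain ⟨a₀, ha₀⟩ := card_pos.1 (Nat.zero_lt_of_lt hfiber)
  obtain ⟨Z, hZ, hZcard⟩ := exists_subset_card_eq (show q ≤ #{a ∈ s | g a = y} by omega)
  refine ⟨a₀, (mem_filter.1 ha₀).1, Z, hZ.trans (filter_subset _ _), hZcard, fun a ha => ?_⟩
  rw [(mem_filter.1 (hZ ha)).2, (mem_filter.1 ha₀).2]

namespace ProductRamsey

def IsBound (n q r f : ℕ) : Prop :=
  ∀ (α : Fin n → Type u) (U : ∀ j, Finset (α j)) (β : Type v) (F : Finset β)
    (Φ : (∀ j, α j) → β),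
    (∀ j, f ≤ #(U j)) → #F ≤ r → (∀ z ∈ piFinset U, Φ z ∈ F) →
    ∃ i ∈ F, ∃ Z : ∀ j, Finset (α j),
      (∀ j, Z j ⊆ U j ∧ #(Z j) = q) ∧ ∀ z ∈ piFinset Z, Φ z = i

def bound (q r : ℕ) : ℕ → ℕ
  | 0 => 0
  | n + 1 => max (bound q r n) (r ^ bound q r n ^ n * (q - 1) + 1)

theorem isBound_zero (q r : ℕ) : IsBound.{u, v} 0 q r 0 :=
  fun _ _ _ _ Φ _ _ hΦ => ⟨Φ isEmptyElim, hΦ _ (mem_piFinset.2 isEmptyElim), isEmptyElim,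
    isEmptyElim, fun _ _ => congrArg Φ (Subsingleton.elim _ _)⟩

theorem IsBound.succ {n q r f : ℕ} (h : IsBound.{u, v} n q r f) :
    IsBound.{u, v} (n + 1) q r (max f (r ^ f ^ n * (q - 1) + 1)) := by
  classical
  intro α U β F Φ hU hFr hΦ
  choose U' hU'U hU'card using fun j : Fin n =>
    exists_subset_card_eq (le_of_max_le_left (hU j.succ))
  have hΦcons : ∀ u ∈ U 0, ∀ w ∈ piFinset U', Φ (Fin.cons u w) ∈ F := fun u hu w hw =>
    hΦ _ (Fin.mem_piFinset_iff_zero_tail.2 ⟨hu, piFinset_subset _ _ hU'U hw⟩)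
  let g : α 0 → piFinset U' → β := fun u w => Φ (Fin.cons u w)
  have hg : ∀ u ∈ U 0, g u ∈ piFinset fun _ => F := fun u hu =>
    mem_piFinset.2 fun w => hΦcons u hu w w.2
  have hcard : #(piFinset fun _ : piFinset U' => F) * (q - 1) < #(U 0) := by
    have hbox : #(piFinset U') = f ^ n := by simp [hU'card]
    have hcolourings : #(piFinset fun _ : piFinset U' => F) ≤ r ^ f ^ n := by
      simpa [hbox] using Nat.pow_le_pow_left hFr (f ^ n)
    have hU0 := le_of_max_le_right (hU 0)
    calc _ ≤ r ^ f ^ n * (q - 1) := Nat.mul_le_mul_right _ hcolourings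
      _ < #(U 0) := by omega
  obtain ⟨u₀, hu₀, Z₀, hZ₀U, hZ₀card, hZ₀g⟩ :=
    Finset.exists_subset_card_eq_forall_eq_of_mul_lt_card hg hcard
  obtain ⟨i, hi, Z', hZ', hmono⟩ :=
    h _ U' β F (fun w => Φ (Fin.cons u₀ w)) (fun j => (hU'card j).ge) hFr (hΦcons u₀ hu₀)
  refine ⟨i, hi, Fin.cons Z₀ Z', Fin.cases ⟨hZ₀U, hZ₀card⟩ fun j =>
    ⟨(hZ' j).1.trans (hU'U j), (hZ' j).2⟩, Fin.consCases fun u w hz => ?_⟩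
  obtain ⟨hu, hw⟩ := Fin.cons_mem_piFinset_cons.1 hz
  have hwU' : w ∈ piFinset U' := piFinset_subset _ _ (fun j => (hZ' j).1) hw
  calc Φ (Fin.cons u w) = g u ⟨w, hwU'⟩ := rfl
    _ = g u₀ ⟨w, hwU'⟩ := by rw [hZ₀g u hu]
    _ = i := hmono w hw

theorem isBound_bound (q r : ℕ) : ∀ n, IsBound.{u, v} n q r (bound q r n)
  | 0 => isBound_zero q r
  | n + 1 => (isBound_bound q r n).succ

end ProductRamsey

theorem stmt_4_general (n q r : ℕ) :
    ∃ f : ℕ, ∀ (α : Fin n → Type u) (U : ∀ j, Finset (α j)) (β : Type v)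
      (F : Finset β) (Φ : (∀ j, α j) → β),
      (∀ j, f ≤ (U j).card) → F.Nonempty → F.card ≤ r →
      (∀ z : ∀ j, α j, (∀ j, z j ∈ U j) → Φ z ∈ F) →
      ∃ i ∈ F, ∃ Z : ∀ j, Finset (α j),
        (∀ j, Z j ⊆ U j ∧ (Z j).card = q) ∧
        ∀ z : ∀ j, α j, (∀ j, z j ∈ Z j) → Φ z = i := by
  refine ⟨ProductRamsey.bound q r n, fun α U β F Φ hU _ hFr hΦ => ?_⟩
  obtain ⟨i, hi, Z, hZ, hmono⟩ := ProductRamsey.isBound_bound q r n α U β F Φ hU hFr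
    fun z hz => hΦ z (mem_piFinset.1 hz)
  exact ⟨i, hi, Z, hZ, fun z hz => hmono z (mem_piFinset.2 hz)⟩

theorem stmt_4 (n q r : ℕ) (hn : 1 ≤ n) (hq : 1 ≤ q) (hr : 1 ≤ r) :
    ∃ f : ℕ, ∀ (α : Fin n → Type u) (U : ∀ j, Finset (α j)) (β : Type v)
      (F : Finset β) (Φ : (∀ j, α j) → β),
      (∀ j, f ≤ (U j).card) → F.Nonempty → F.card ≤ r →
      (∀ z : ∀ j, α j, (∀ j, z j ∈ U j) → Φ z ∈ F) →
      ∃ i ∈ F, ∃ Z : ∀ j, Finset (α j),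
        (∀ j, Z j ⊆ U j ∧ (Z j).card = q) ∧
        ∀ z : ∀ j, α j, (∀ j, z j ∈ Z j) → Φ z = i :=
  stmt_4_general n q r
end

section
/- Let s ∈ ℕ and let 𝔠 = (S, L) be an ample interrupted (2s+1)-constellation. Then 𝔠 has an induced minor isomorphic to K_{s,s}, and hence treewidth at least s. -/
open SimpleGraph

universe u v

/-!
Write the induced path `L` as `v 0, …, v (n-1)` and `S` as `x 0, …, x 2s` in the interrupted
order. By ampleness the early vertices `x 0, …, x s` have pairwise distinct neighbours
`q 0 < … < q s` on `L`. Two early vertices attached at consecutive points `q t`, `q (t+1)` are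
joined by an induced route through `v[q t, q (t+1)]`, so by interruption every late vertex
`x (s+1+j)` has a neighbour on it, and by ampleness one strictly inside the open segment
`v(q t, q (t+1))`. These `s` open segments are pairwise anticomplete and the late vertices are
pairwise nonadjacent: an induced `K_{s,s}`. Finally `K_{s,s}` has a `K_{s+1}` minor, and by the
Helly property of subtrees one bag of any tree decomposition meets all `s + 1` branch sets.
-/
section Basic

variable {V : Type u} {G : SimpleGraph V}

lemma Touches.symm {X Y : Set V} (h : Touches G X Y) : Touches G Y X := by
  obtain ⟨x, hx, y, hy, hxy⟩ := h
  exact ⟨y, hy, x, hx, hxy.symm⟩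

lemma Touches.mono {X X' Y Y' : Set V} (hX : X ⊆ X') (hY : Y ⊆ Y') (h : Touches G X Y) :
    Touches G X' Y' := by
  obtain ⟨x, hx, y, hy, hxy⟩ := h
  exact ⟨x, hX hx, y, hY hy, hxy⟩

lemma Anticomplete.symm {X Y : Set V} (h : Anticomplete G X Y) : Anticomplete G Y X :=
  ⟨h.1.symm, fun _ hy _ hx hyx => h.2 hx hy hyx.symm⟩

lemma connected_induce_union_of_touches {X Y : Set V} (hX : (G.induce X).Connected)
    (hY : (G.induce Y).Connected) (h : Touches G X Y) : (G.induce (X ∪ Y)).Connected := by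
  obtain ⟨x, hx, y, hy, hxy⟩ := h
  exact connected_induce_union hX.preconnected hY.preconnected hx hy hxy

lemma exists_walk_support_subset_of_connected_induce {X : Set V}
    (hX : (G.induce X).Connected) {a b : V} (ha : a ∈ X) (hb : b ∈ X) :
    ∃ W : G.Walk a b, ∀ z ∈ W.support, z ∈ X := by
  obtain ⟨W⟩ := hX.preconnected ⟨a, ha⟩ ⟨b, hb⟩
  refine ⟨W.map (Embedding.induce X).toHom, fun z hz => ?_⟩
  obtain ⟨z', -, rfl⟩ := List.mem_map.mp ((W.support_map _) ▸ hz)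
  exact z'.2

end Basic

section InducedPaths

variable {V : Type u} {G : SimpleGraph V}

lemma IsPathIn.reverse {a b : V} {W : G.Walk a b} (h : IsPathIn G W) : IsPathIn G W.reverse := by
  refine ⟨h.1.reverse, ?_⟩
  simpa only [Walk.support_reverse, List.mem_reverse] using h.2

lemma interiorSet_reverse {a b : V} (W : G.Walk a b) :
    interiorSet G W.reverse = interiorSet G W := by
  ext z
  simp only [interiorSet, Walk.support_reverse, List.mem_reverse, Set.mem_ofPred_eq]
  tauto

lemma isInducedPath_support {a b : V} {W : G.Walk a b} (hW : W.IsPath)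
    (hchord : ∀ i j, i + 1 < j → j ≤ W.length → ¬ G.Adj (W.getVert i) (W.getVert j)) :
    IsInducedPath G {z | z ∈ W.support} := by
  let f : Fin (W.length + 1) → {z | z ∈ W.support} :=
    fun i => ⟨W.getVert i, W.getVert_mem_support i⟩
  have hf : Function.Bijective f := by
    refine ⟨fun i j hij => Fin.ext (hW.getVert_injOn (Nat.lt_succ_iff.mp i.2)
      (Nat.lt_succ_iff.mp j.2) (congrArg Subtype.val hij)), fun ⟨z, hz⟩ => ?_⟩
    obtain ⟨i, rfl, hi⟩ := Walk.mem_support_iff_exists_getVert.mp hz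
    exact ⟨⟨i, by omega⟩, rfl⟩
  have hadj : ∀ i j : Fin (W.length + 1),
      G.Adj (W.getVert i) (W.getVert j) ↔ (pathGraph (W.length + 1)).Adj i j := by
    intro i j
    rw [pathGraph_adj]
    constructor
    · intro h
      have hij : (i : ℕ) ≠ j := fun hij => h.ne (by rw [hij])
      by_contra
      rcases Nat.lt_or_gt_of_ne hij with hlt | hlt
      · exact hchord i j (by omega) (by omega) h
      · exact hchord j i (by omega) (by omega) h.symm
    · rintro (h | h)
      · simpa [← h] using W.adj_getVert_succ (i := i) (by omega)
      · simpa [← h] using (W.adj_getVert_succ (i := j) (by omega)).symm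
  exact ⟨W.length + 1, by omega, ⟨(Equiv.ofBijective f hf).symm, fun {z z'} => by
    obtain ⟨i, rfl⟩ := hf.2 z
    obtain ⟨j, rfl⟩ := hf.2 z'
    simpa [Equiv.ofBijective_symm_apply_apply] using (hadj i j).symm⟩⟩

end InducedPaths

namespace SimpleGraph.Walk

variable {V : Type u} {G : SimpleGraph V}

lemma support_drop_subset {a b : V} (W : G.Walk a b) (j : ℕ) :
    (W.drop j).support ⊆ W.support := by
  intro z hz
  obtain ⟨m, rfl, -⟩ := Walk.mem_support_iff_exists_getVert.mp hz
  rw [Walk.drop_getVert]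
  exact W.getVert_mem_support _

lemma support_take_subset {a b : V} (W : G.Walk a b) (i : ℕ) :
    (W.take i).support ⊆ W.support := by
  rw [Walk.support_take]
  exact List.take_subset _ _

lemma exists_shorter_of_getVert_eq {a b : V} (W : G.Walk a b) {i j : ℕ} (hij : i < j)
    (hj : j ≤ W.length) (h : W.getVert i = W.getVert j) :
    ∃ W' : G.Walk a b, W'.length < W.length ∧ W'.support ⊆ W.support := by
  refine ⟨(W.take i).append ((W.drop j).copy h.symm rfl), ?_, ?_⟩
  · simp only [Walk.length_append, Walk.take_length, Walk.length_copy, Walk.drop_length]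
    omega
  · rw [Walk.support_append, Walk.support_copy]
    exact List.append_subset.mpr ⟨W.support_take_subset i,
      List.Subset.trans (List.tail_subset _) (W.support_drop_subset j)⟩

lemma exists_shorter_of_adj_getVert {a b : V} (W : G.Walk a b) {i j : ℕ} (hij : i + 1 < j)
    (hj : j ≤ W.length) (h : G.Adj (W.getVert i) (W.getVert j)) :
    ∃ W' : G.Walk a b, W'.length < W.length ∧ W'.support ⊆ W.support := by
  refine ⟨(W.take i).append (.cons h (W.drop j)), ?_, ?_⟩
  · simp only [Walk.length_append, Walk.take_length, Walk.length_cons, Walk.drop_length]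
    omega
  · rw [Walk.support_append, Walk.support_cons, List.tail_cons]
    exact List.append_subset.mpr ⟨W.support_take_subset i, W.support_drop_subset j⟩

lemma isPathIn_of_forall_length_le {a b : V} {W : G.Walk a b}
    (hmin : ∀ W' : G.Walk a b, W'.support ⊆ W.support → W.length ≤ W'.length) :
    IsPathIn G W := by
  have hpath : W.IsPath := by
    rw [← Walk.IsPath.getVert_injOn_iff]
    intro i hi j hj h
    simp only [Set.mem_ofPred_eq] at hi hj
    by_contra hne
    rcases Nat.lt_or_gt_of_ne hne with hlt | hlt
    · obtain ⟨W', hlen, hsub⟩ := W.exists_shorter_of_getVert_eq hlt hj h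
      exact (hmin W' hsub).not_gt hlen
    · obtain ⟨W', hlen, hsub⟩ := W.exists_shorter_of_getVert_eq hlt hi h.symm
      exact (hmin W' hsub).not_gt hlen
  refine ⟨hpath, isInducedPath_support hpath fun i j hij hj h => ?_⟩
  obtain ⟨W', hlen, hsub⟩ := W.exists_shorter_of_adj_getVert hij hj h
  exact (hmin W' hsub).not_gt hlen

lemma exists_isPathIn_support_subset {a b : V} (W₀ : G.Walk a b) :
    ∃ W : G.Walk a b, IsPathIn G W ∧ W.support ⊆ W₀.support := by
  classical
  have hex : ∃ m, ∃ W : G.Walk a b, W.support ⊆ W₀.support ∧ W.length = m :=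
    ⟨_, W₀, List.Subset.refl _, rfl⟩
  obtain ⟨W, hW₀, hlen⟩ := Nat.find_spec hex
  refine ⟨W, isPathIn_of_forall_length_le fun W' hW' => ?_, hW₀⟩
  rw [hlen]
  exact Nat.find_min' hex ⟨W', List.Subset.trans hW' hW₀, rfl⟩

end SimpleGraph.Walk

section PathEmbedding

variable {V : Type u} {G : SimpleGraph V} {n : ℕ}

lemma IsInducedPath.exists_embedding {P : Set V} (hP : IsInducedPath G P) :
    ∃ (n : ℕ) (v : pathGraph n ↪g G), Set.range v = P := by
  obtain ⟨n, -, ⟨e⟩⟩ := hP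
  refine ⟨n, (Embedding.induce P).comp e.symm.toEmbedding, ?_⟩
  ext z
  simp only [Set.mem_range, Embedding.coe_comp, Function.comp_apply]
  refine ⟨fun ⟨r, hr⟩ => hr ▸ (e.symm r).2, fun hz => ⟨e ⟨z, hz⟩, ?_⟩⟩
  simp

lemma preconnected_induce_pathGraph {X : Set (Fin n)} (hX : X.OrdConnected) :
    ((pathGraph n).induce X).Preconnected := by
  have step : ∀ d (r r' : Fin n) (hr : r ∈ X) (hr' : r' ∈ X), r.val + d = r'.val →
      ((pathGraph n).induce X).Reachable ⟨r, hr⟩ ⟨r', hr'⟩ := by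
    intro d
    induction d with
    | zero => intro r r' hr hr' h; obtain rfl : r = r' := Fin.ext (by omega); rfl
    | succ d ih =>
      intro r r' hr hr' h
      have hr₁ : (⟨r + 1, by omega⟩ : Fin n) ∈ X :=
        hX.out hr hr' ⟨Fin.le_def.mpr (Nat.le_succ _),
          Fin.le_def.mpr (show r.val + 1 ≤ r' by omega)⟩
      refine Reachable.trans (Adj.reachable ?_) (ih _ r' hr₁ hr' (show r.val + 1 + d = r' by omega))
      simp [pathGraph_adj]
  rintro ⟨r, hr⟩ ⟨r', hr'⟩
  rcases le_total r r' with h | h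
  · exact step _ r r' hr hr' (Nat.add_sub_of_le h)
  · exact (step _ r' r hr' hr (Nat.add_sub_of_le h)).symm

lemma connected_induce_image_of_ordConnected (v : pathGraph n ↪g G) {X : Set (Fin n)}
    (hX : X.OrdConnected) (hne : X.Nonempty) : (G.induce (v '' X)).Connected := by
  have : Nonempty X := hne.to_subtype
  refine (Connected.mk (preconnected_induce_pathGraph hX)).map
    (induceHom v.toHom (Set.mapsTo_image v X)) ?_
  rintro ⟨_, r, hr, rfl⟩
  exact ⟨⟨r, hr⟩, rfl⟩

lemma anticomplete_image_Ioo (v : pathGraph n ↪g G) {a b a' b' : Fin n} (h : b ≤ a') :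
    Anticomplete G (v '' Set.Ioo a b) (v '' Set.Ioo a' b') := by
  refine ⟨Set.disjoint_left.mpr ?_, ?_⟩
  · rintro _ ⟨r, ⟨-, hrb⟩, rfl⟩ ⟨r', ⟨har', -⟩, hrr'⟩
    rw [← v.injective hrr'] at hrb
    exact (lt_irrefl _) (hrb.trans_le h |>.trans har')
  · rintro _ ⟨r, ⟨-, hrb⟩, rfl⟩ _ ⟨r', ⟨har', -⟩, rfl⟩ hadj
    rw [v.map_adj_iff, pathGraph_adj] at hadj
    have := Fin.lt_def.mp (hrb.trans_le h)
    have := Fin.lt_def.mp har'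
    omega

end PathEmbedding

section Helly

variable {κ : Type*} {T : SimpleGraph κ}

def IsPathClosed (T : SimpleGraph κ) (X : Set κ) : Prop :=
  ∀ ⦃a b⦄, a ∈ X → b ∈ X → ∀ p : T.Walk a b, p.IsPath → ∀ z ∈ p.support, z ∈ X

lemma IsPathClosed.inter {X Y : Set κ} (hX : IsPathClosed T X) (hY : IsPathClosed T Y) :
    IsPathClosed T (X ∩ Y) :=
  fun _ _ ha hb p hp z hz => ⟨hX ha.1 hb.1 p hp z hz, hY ha.2 hb.2 p hp z hz⟩

lemma SimpleGraph.IsTree.isPathClosed_of_connected (hT : T.IsTree) {X : Set κ}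
    (hX : (T.induce X).Connected) : IsPathClosed T X := by
  classical
  intro a b ha hb p hp z hz
  obtain ⟨W, hW⟩ := exists_walk_support_subset_of_connected_induce hX ha hb
  obtain rfl : p = W.bypass := (hT.existsUnique_path a b).unique hp W.bypass_isPath
  exact hW z (W.support_bypass_subset_support hz)

lemma SimpleGraph.Walk.IsPath.exists_final_segment {a b : κ} {p : T.Walk a b}
    (hp : p.IsPath) {Y : Set κ} (hY : ∃ z ∈ p.support, z ∈ Y) :
    ∃ m ∈ Y, ∃ w : T.Walk m b, w.IsPath ∧ w.support ⊆ p.support ∧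
      ∀ z ∈ w.support, z ∈ Y → z = m := by
  induction p with
  | nil =>
    obtain ⟨z, hz, hzY⟩ := hY
    rw [Walk.support_nil, List.mem_singleton] at hz
    exact ⟨_, hz ▸ hzY, .nil, .nil, List.Subset.refl _, by simp⟩
  | @cons a a' b h p' ih =>
    by_cases h' : ∃ z ∈ p'.support, z ∈ Y
    · obtain ⟨m, hm, w, hw, hwp, hwY⟩ := ih hp.of_cons h'
      exact ⟨m, hm, w, hw, List.Subset.trans hwp (List.subset_cons_self _ _), hwY⟩
    · simp only [not_exists, not_and] at h'
      obtain ⟨z, hz, hzY⟩ := hY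
      have hz' : z = a := by
        rcases List.mem_cons.mp (Walk.support_cons _ _ ▸ hz) with rfl | hz
        exacts [rfl, absurd hzY (h' z hz)]
      refine ⟨a, hz' ▸ hzY, _, hp, List.Subset.refl _, fun z hz hzY => ?_⟩
      rcases List.mem_cons.mp (Walk.support_cons _ _ ▸ hz) with rfl | hz
      exacts [rfl, absurd hzY (h' z hz)]

/-- The common vertex is the median of `a ∈ X ∩ Y`, `b ∈ X ∩ Z` and `c ∈ Y ∩ Z`. -/
lemma SimpleGraph.IsTree.inter_inter_nonempty (hT : T.IsTree) {X Y Z : Set κ}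
    (hX : IsPathClosed T X) (hY : IsPathClosed T Y) (hZ : IsPathClosed T Z) (hXY : (X ∩ Y).Nonempty)
    (hXZ : (X ∩ Z).Nonempty) (hYZ : (Y ∩ Z).Nonempty) : (X ∩ Y ∩ Z).Nonempty := by
  classical
  obtain ⟨a, haX, haY⟩ := hXY
  obtain ⟨b, hbX, hbZ⟩ := hXZ
  obtain ⟨c, hcY, hcZ⟩ := hYZ
  obtain ⟨p, hp, -⟩ := hT.existsUnique_path a b
  obtain ⟨r, hr, -⟩ := hT.existsUnique_path a c
  obtain ⟨m, hmr, w, hw, hwp, hwr⟩ :=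
    hp.exists_final_segment (Y := {z | z ∈ r.support})
      ⟨a, p.start_mem_support, r.start_mem_support⟩
  have hq : (w.reverse.append (r.dropUntil m hmr)).IsPath := by
    have hr' := (hr.dropUntil hmr).support_nodup
    rw [← Walk.cons_tail_support (r.dropUntil m hmr), List.nodup_cons] at hr'
    rw [Walk.isPath_def, Walk.support_append, List.nodup_append]
    refine ⟨hw.reverse.support_nodup, hr'.2, fun z hz z' hz' hzz' => ?_⟩
    subst hzz'
    rw [Walk.support_reverse, List.mem_reverse] at hz
    obtain rfl := hwr z hz (r.support_dropUntil_subset_support hmr (List.mem_of_mem_tail hz'))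
    exact hr'.1 hz'
  refine ⟨m, ⟨hX haX hbX p hp m (hwp w.start_mem_support), hY haY hcY r hr m hmr⟩,
    hZ hbZ hcZ _ hq m ?_⟩
  rw [Walk.mem_support_append_iff]
  exact Or.inl (w.reverse.end_mem_support)

lemma SimpleGraph.IsTree.exists_forall_mem_of_pairwise_inter_nonempty (hT : T.IsTree)
    {α : Type*} {I : Finset α} (hI : I.Nonempty) {C : α → Set κ}
    (hC : ∀ i ∈ I, IsPathClosed T (C i))
    (hCC : ∀ i ∈ I, ∀ j ∈ I, (C i ∩ C j).Nonempty) : ∃ t, ∀ i ∈ I, t ∈ C i := by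
  induction hI using Finset.Nonempty.cons_induction generalizing C with
  | singleton a =>
    obtain ⟨t, ht, -⟩ := hCC a (Finset.mem_singleton_self a) a (Finset.mem_singleton_self a)
    exact ⟨t, fun i hi => Finset.mem_singleton.mp hi ▸ ht⟩
  | cons a I ha hI ih =>
    have hmem : ∀ {i}, i ∈ I → i ∈ Finset.cons a I ha := fun hi => Finset.mem_cons_of_mem hi
    have ha' : a ∈ Finset.cons a I ha := Finset.mem_cons_self a I
    obtain ⟨t, ht⟩ := ih (C := fun i => C i ∩ C a)
      (fun i hi => (hC i (hmem hi)).inter (hC a ha')) fun i hi j hj => by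
        obtain ⟨t, ⟨hti, htj⟩, hta⟩ := hT.inter_inter_nonempty (hC i (hmem hi)) (hC j (hmem hj))
          (hC a ha') (hCC i (hmem hi) j (hmem hj)) (hCC i (hmem hi) a ha') (hCC j (hmem hj) a ha')
        exact ⟨t, ⟨hti, hta⟩, htj, hta⟩
    refine ⟨t, fun i hi => ?_⟩
    rcases Finset.mem_cons.mp hi with rfl | hi
    · obtain ⟨i', hi'⟩ := hI
      exact (ht i' hi').2
    · exact (ht i hi).1

end Helly

section Treewidth

variable {V : Type u} {G : SimpleGraph V}

lemma connected_induce_bags {κ : Type*} {T : SimpleGraph κ} {bag : κ → Set V}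
    (hedge : ∀ ⦃x y⦄, G.Adj x y → ∃ t, x ∈ bag t ∧ y ∈ bag t)
    (hbag : ∀ x, (T.induce {t | x ∈ bag t}).Connected) {X : Set V}
    (hX : (G.induce X).Connected) : (T.induce {t | ∃ x ∈ X, x ∈ bag t}).Connected := by
  set D := {t | ∃ x ∈ X, x ∈ bag t}
  have hreach : ∀ {x} (hx : x ∈ X) {t t'} (ht : x ∈ bag t) (ht' : x ∈ bag t'),
      (T.induce D).Reachable ⟨t, x, hx, ht⟩ ⟨t', x, hx, ht'⟩ := by
    intro x hx t t' ht ht'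
    have hsub : {t | x ∈ bag t} ⊆ D := fun _ ht => ⟨x, hx, ht⟩
    exact ((hbag x).preconnected ⟨t, ht⟩ ⟨t', ht'⟩).map (T.induceHomOfLE hsub).toHom
  have hwalk : ∀ {x y : X} (W : (G.induce X).Walk x y) {t t'} (ht : x.1 ∈ bag t)
      (ht' : y.1 ∈ bag t'), (T.induce D).Reachable ⟨t, x, x.2, ht⟩ ⟨t', y, y.2, ht'⟩ := by
    intro x y W
    induction W with
    | @nil x => exact fun ht ht' => hreach x.2 ht ht'
    | @cons x _ _ hadj W ih =>
      intro t t' ht ht'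
      obtain ⟨t'', h₁, h₂⟩ := hedge hadj
      exact (hreach x.2 ht h₁).trans (ih h₂ ht')
  obtain ⟨⟨x, hx⟩⟩ := hX.nonempty
  obtain ⟨⟨t, ht⟩⟩ := (hbag x).nonempty
  have : Nonempty D := ⟨⟨t, x, hx, ht⟩⟩
  refine Connected.mk ?_
  rintro ⟨t, x, hx, ht⟩ ⟨t', y, hy, ht'⟩
  obtain ⟨W⟩ := hX.preconnected ⟨x, hx⟩ ⟨y, hy⟩
  exact hwalk W ht ht'

/-- The subtrees of bags meeting the branch sets of a clique minor pairwise intersect, so by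
Helly some bag meets all of them. -/
theorem not_treewidthAtMost_of_isMinorOf_completeGraph {ι : Type*} [Fintype ι] {k : ℕ}
    (h : IsMinorOf (completeGraph ι) G) (hk : k + 1 < Fintype.card ι) :
    ¬ TreewidthAtMost G k := by
  obtain ⟨φ, hconn, hdisj, htouch⟩ := h
  rintro ⟨κ, T, bag, hT, -, hedge, hbag, hsize⟩
  have hmeet : ∀ i j, ({t | ∃ x ∈ φ i, x ∈ bag t} ∩ {t | ∃ x ∈ φ j, x ∈ bag t}).Nonempty := by
    intro i j
    obtain rfl | hij := eq_or_ne i j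
    · obtain ⟨⟨x, hx⟩⟩ := (hconn i).nonempty
      obtain ⟨⟨t, ht⟩⟩ := (hbag x).nonempty
      exact ⟨t, ⟨x, hx, ht⟩, x, hx, ht⟩
    · obtain ⟨x, hx, y, hy, hxy⟩ := htouch hij
      obtain ⟨t, hxt, hyt⟩ := hedge hxy
      exact ⟨t, ⟨x, hx, hxt⟩, y, hy, hyt⟩
  have hne : (Finset.univ : Finset ι).Nonempty :=
    Finset.univ_nonempty_iff.mpr (Fintype.card_pos_iff.mp (by omega))
  obtain ⟨t, ht⟩ := hT.exists_forall_mem_of_pairwise_inter_nonempty hne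
    (fun i _ => hT.isPathClosed_of_connected (connected_induce_bags hedge hbag (hconn i)))
    (fun i _ j _ => hmeet i j)
  choose y hy hyt using fun i => ht i (Finset.mem_univ i)
  have : Finite (bag t) := (hsize t).1.to_subtype
  have hcard := Nat.card_le_card_of_injective (fun i => (⟨y i, hyt i⟩ : bag t)) fun i j hij => by
    by_contra hne
    have hyij : y i = y j := congrArg Subtype.val hij
    exact Set.disjoint_left.mp (hdisj hne) (hy i) (hyij ▸ hy j)
  rw [Nat.card_eq_fintype_card, Nat.card_coe_set_eq] at hcard
  have := (hsize t).2
  omega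

lemma IsMinorOf.completeGraph_option {α : Type*} [DecidableEq α] (i₀ : α)
    (h : IsMinorOf (completeBipartiteGraph α α) G) :
    IsMinorOf (completeGraph (Option α)) G := by
  obtain ⟨φ, hconn, hdisj, htouch⟩ := h
  have hT : ∀ i j, Touches G (φ (.inl i)) (φ (.inr j)) := fun i j => htouch (by simp)
  let C : Option α → Set V := fun
    | none => φ (.inr i₀)
    | some i => if i = i₀ then φ (.inl i₀) else φ (.inl i) ∪ φ (.inr i)
  have hC₀ : C (some i₀) = φ (.inl i₀) := if_pos rfl
  have hC : ∀ {i}, i ≠ i₀ → C (some i) = φ (.inl i) ∪ φ (.inr i) := fun hi => if_neg hi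
  have hCl : ∀ i, φ (.inl i) ⊆ C (some i) := by
    intro i
    obtain rfl | hi := eq_or_ne i i₀
    exacts [hC₀.superset, (hC hi).superset.trans' Set.subset_union_left]
  have hCsub : ∀ i, C (some i) ⊆ φ (.inl i) ∪ φ (.inr i) := by
    intro i
    obtain rfl | hi := eq_or_ne i i₀
    exacts [hC₀.subset.trans Set.subset_union_left, (hC hi).subset]
  refine ⟨C, ?_, ?_, ?_⟩
  · rintro (_ | i)
    · exact hconn _
    · obtain rfl | hi := eq_or_ne i i₀
      · exact hC₀ ▸ hconn _
      · exact hC hi ▸ connected_induce_union_of_touches (hconn _) (hconn _) (hT i i)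
  · rintro (_ | i) (_ | j) hne
    · exact absurd rfl hne
    · obtain rfl | hj := eq_or_ne j i₀
      · exact hC₀ ▸ hdisj (by simp)
      · exact (Set.disjoint_union_right.mpr
          ⟨hdisj (by simp), hdisj (by simpa using hj.symm)⟩).mono_right (hCsub j)
    · obtain rfl | hi := eq_or_ne i i₀
      · exact hC₀ ▸ hdisj (by simp)
      · exact (Set.disjoint_union_left.mpr
          ⟨hdisj (by simp), hdisj (by simpa using hi)⟩).mono_left (hCsub i)
    · have hij : i ≠ j := fun h => hne (congrArg _ h)
      refine (Set.disjoint_union_left.mpr ⟨Set.disjoint_union_right.mpr ⟨?_, ?_⟩,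
        Set.disjoint_union_right.mpr ⟨?_, ?_⟩⟩).mono (hCsub i) (hCsub j) <;>
        exact hdisj (by simp [hij])
  · rintro (_ | i) (_ | j) hadj
    · exact absurd rfl hadj
    · exact (hT j i₀).symm.mono subset_rfl (hCl j)
    · exact (hT i i₀).mono (hCl i) subset_rfl
    · have hij : i ≠ j := fun h => hadj (congrArg _ h)
      by_cases hj : j = i₀
      · exact (hT j i).symm.mono ((hC (hj ▸ hij)).superset.trans' Set.subset_union_right) (hCl j)
      · exact (hT i j).mono (hCl i) ((hC hj).superset.trans' Set.subset_union_right)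

theorem not_treewidthAtMost_of_isMinorOf_completeBipartiteGraph {s : ℕ} (hs : 1 ≤ s)
    (h : IsMinorOf (completeBipartiteGraph (Fin s) (Fin s)) G) : ¬ TreewidthAtMost G (s - 1) :=
  not_treewidthAtMost_of_isMinorOf_completeGraph (h.completeGraph_option ⟨0, hs⟩) (by simp; omega)

end Treewidth

section Minors

variable {V : Type u} {G : SimpleGraph V}

lemma IsInducedMinorOf.isMinorOf {W : Type v} {H : SimpleGraph W} (h : IsInducedMinorOf H G) :
    IsMinorOf H G :=
  let ⟨φ, hconn, hdisj, hadj, _⟩ := h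
  ⟨φ, hconn, hdisj, hadj⟩

lemma isInducedMinorOf_completeBipartiteGraph {α β : Type*} (A : α → Set V) (B : β → Set V)
    (hA : ∀ i, (G.induce (A i)).Connected) (hB : ∀ j, (G.induce (B j)).Connected)
    (hAA : Pairwise fun i i' => Anticomplete G (A i) (A i'))
    (hBB : Pairwise fun j j' => Anticomplete G (B j) (B j'))
    (hAB : ∀ i j, Disjoint (A i) (B j)) (hT : ∀ i j, Touches G (A i) (B j)) :
    IsInducedMinorOf (completeBipartiteGraph α β) G := by
  refine ⟨Sum.elim A B, ?_, ?_, ?_, ?_⟩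
  · rintro (i | j)
    exacts [hA i, hB j]
  · rintro (i | j) (i' | j') hne
    · exact (hAA fun h => hne (congrArg _ h)).1
    · exact hAB i j'
    · exact (hAB i' j).symm
    · exact (hBB fun h => hne (congrArg _ h)).1
  · rintro (i | j) (i' | j') hadj
    · simp at hadj
    · exact hT i j'
    · exact (hT i' j).symm
    · simp at hadj
  · rintro (i | j) (i' | j') hne hnadj
    · exact (hAA fun h => hne (congrArg _ h)).2
    · simp at hnadj
    · simp at hnadj
    · exact (hBB fun h => hne (congrArg _ h)).2

lemma isInducedMinorOf_completeBipartiteGraph_of_segments {n s : ℕ} (v : pathGraph n ↪g G)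
    {q : Fin (s + 1) → Fin n} (hq : StrictMono q) {y : Fin s → V} (hy : Function.Injective y)
    (hyv : ∀ j, y j ∉ Set.range v) (hyy : Pairwise fun j j' => ¬ G.Adj (y j) (y j'))
    (hhit : ∀ (t : Fin s) j, ∃ r ∈ Set.Ioo (q t.castSucc) (q t.succ), G.Adj (y j) (v r)) :
    IsInducedMinorOf (completeBipartiteGraph (Fin s) (Fin s)) G := by
  have hseg : ∀ {t t' : Fin s}, t < t' →
      Anticomplete G (v '' Set.Ioo (q t.castSucc) (q t.succ))
        (v '' Set.Ioo (q t'.castSucc) (q t'.succ)) :=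
    fun h => anticomplete_image_Ioo v (hq.monotone (Fin.succ_le_castSucc_iff.mpr h))
  refine isInducedMinorOf_completeBipartiteGraph
    (fun t : Fin s => v '' Set.Ioo (q t.castSucc) (q t.succ)) (fun j => {y j})
    (fun t => ?_) (fun j => ?_) (fun t t' hne => ?_) (fun j j' hne => ?_)
    (fun t j => ?_) (fun t j => ?_)
  · obtain ⟨r, hr, -⟩ := hhit t ⟨0, (Fin.pos t)⟩
    exact connected_induce_image_of_ordConnected v Set.ordConnected_Ioo ⟨r, hr⟩
  · exact Connected.of_subsingleton
  · rcases lt_or_gt_of_ne hne with h | h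
    exacts [hseg h, (hseg h).symm]
  · refine ⟨Set.disjoint_singleton.mpr (hy.ne hne), ?_⟩
    rintro _ rfl _ rfl
    exact hyy hne
  · exact Set.disjoint_singleton_right.mpr fun h => hyv j (Set.image_subset_range _ _ h)
  · obtain ⟨r, hr, hadj⟩ := hhit t j
    exact ⟨v r, ⟨r, hr, rfl⟩, y j, rfl, hadj.symm⟩

end Minors

section Constellation

variable {V : Type u} {G : SimpleGraph V} {n : ℕ}

/-- The route is an induced path inside the walk `u₁, v p, …, v p', u₂`. -/
lemma exists_adj_Ioo_of_forall_isPathIn (v : pathGraph n ↪g G) {u₁ u₂ w : V} {p p' : Fin n}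
    (hpp' : p ≤ p') (h₁ : G.Adj u₁ (v p)) (h₂ : G.Adj (v p') u₂)
    (hw₁ : ¬ G.Adj w (v p)) (hw₂ : ¬ G.Adj w (v p'))
    (hroute : ∀ R : G.Walk u₁ u₂, IsPathIn G R → interiorSet G R ⊆ Set.range v →
      ∃ z ∈ interiorSet G R, G.Adj w z) :
    ∃ r ∈ Set.Ioo p p', G.Adj w (v r) := by
  obtain ⟨W, hW⟩ := exists_walk_support_subset_of_connected_induce
    (connected_induce_image_of_ordConnected v Set.ordConnected_Icc ⟨p, le_rfl, hpp'⟩)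
    ⟨p, ⟨le_rfl, hpp'⟩, rfl⟩ ⟨p', ⟨hpp', le_rfl⟩, rfl⟩
  obtain ⟨R, hR, hRW⟩ := (Walk.cons h₁ (W.concat h₂)).exists_isPathIn_support_subset
  have hint : interiorSet G R ⊆ v '' Set.Icc p p' := by
    rintro z ⟨hz, hz₁, hz₂⟩
    have := hRW hz
    simp only [Walk.support_cons, Walk.support_concat, List.mem_cons, List.mem_append,
      List.not_mem_nil, or_false] at this
    rcases this with rfl | hz | rfl
    exacts [absurd rfl hz₁, hW z hz, absurd rfl hz₂]
  obtain ⟨z, hz, hwz⟩ := hroute R hR (hint.trans (Set.image_subset_range _ _))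
  obtain ⟨r, ⟨hpr, hrp'⟩, rfl⟩ := hint hz
  refine ⟨r, ⟨lt_of_le_of_ne hpr ?_, lt_of_le_of_ne hrp' ?_⟩, hwz⟩
  · rintro rfl; exact hw₁ hwz
  · rintro rfl; exact hw₂ hwz

/-- The enumeration `x` of `S` in the definition of `IsInterrupted`. -/
def IsInterruptedBy (G : SimpleGraph V) (L : Set V) {m : ℕ} (x : Fin m → V) : Prop :=
  ∀ ⦃i j k : Fin m⦄, i < j → j < k →
    ∀ (R : G.Walk (x i) (x j)), IsPathIn G R → interiorSet G R ⊆ L →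
      ∃ z ∈ interiorSet G R, G.Adj (x k) z

lemma IsInterruptedBy.exists_adj {L : Set V} {m : ℕ} {x : Fin m → V}
    (hx : IsInterruptedBy G L x) {i j k : Fin m} (hij : i ≠ j) (hik : i < k) (hjk : j < k)
    (R : G.Walk (x i) (x j)) (hR : IsPathIn G R) (hRL : interiorSet G R ⊆ L) :
    ∃ z ∈ interiorSet G R, G.Adj (x k) z := by
  rcases lt_or_gt_of_ne hij with h | h
  · exact hx h hjk R hR hRL
  · rw [← interiorSet_reverse] at hRL ⊢
    exact hx h hik R.reverse hR.reverse hRL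

lemma IsInterruptedBy.exists_adj_Ioo (v : pathGraph n ↪g G) {m : ℕ} {x : Fin m → V}
    (hxinj : Function.Injective x) (hx : IsInterruptedBy G (Set.range v) x)
    (hamp : IsAmple G (Set.range x) (Set.range v))
    {i j k : Fin m} (hij : i ≠ j) (hik : i < k) (hjk : j < k) {p p' : Fin n} (hpp' : p ≤ p')
    (hi : G.Adj (x i) (v p)) (hj : G.Adj (x j) (v p')) :
    ∃ r ∈ Set.Ioo p p', G.Adj (x k) (v r) := by
  have hamp' : ∀ {k'}, k' ≠ k → ∀ {r}, G.Adj (x k') (v r) → ¬ G.Adj (x k) (v r) :=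
    fun {_} hk' {r} h₁ h₂ => hamp ⟨_, rfl⟩ ⟨_, rfl⟩ (fun h => hk' (hxinj h)) ⟨r, rfl⟩ ⟨h₁, h₂⟩
  exact exists_adj_Ioo_of_forall_isPathIn v hpp' hi hj.symm (hamp' hik.ne hi) (hamp' hjk.ne hj)
    fun R hR hRL => hx.exists_adj hij hik hjk R hR hRL

lemma IsAmple.mono {S S' L : Set V} (h : IsAmple G S L) (hS : S' ⊆ S) : IsAmple G S' L :=
  fun _ hx _ hy hxy _ hz => h (hS hx) (hS hy) hxy hz

/-- Ampleness makes the chosen attachment points distinct, so sorting them is strictly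
monotone. -/
lemma exists_strictMono_attachments {m : ℕ} (v : pathGraph n ↪g G) {x : Fin m → V}
    (hx : Function.Injective x) (hamp : IsAmple G (Set.range x) (Set.range v))
    (hnbr : ∀ k, ∃ r, G.Adj (x k) (v r)) :
    ∃ (σ : Equiv.Perm (Fin m)) (q : Fin m → Fin n),
      StrictMono q ∧ ∀ t, G.Adj (x (σ t)) (v (q t)) := by
  choose π hπ using hnbr
  have hπ_inj : Function.Injective π := fun k k' h => by
    by_contra hne
    exact hamp ⟨k, rfl⟩ ⟨k', rfl⟩ (hx.ne hne) ⟨π k, rfl⟩ ⟨hπ k, h ▸ hπ k'⟩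
  exact ⟨Tuple.sort π, π ∘ Tuple.sort π, (Tuple.monotone_sort π).strictMono_of_injective
    (hπ_inj.comp (Tuple.sort π).injective), fun t => hπ _⟩

end Constellation

theorem stmt_6_general {V : Type u} (G : SimpleGraph V) (s : ℕ) (hs : 1 ≤ s)
    (S L : Set V) (hcon : IsConstellation G S L (2 * s + 1))
    (hamp : IsAmple G S L) (hint : IsInterrupted G S L (2 * s + 1)) :
    IsInducedMinorOf (completeBipartiteGraph (Fin s) (Fin s)) G ∧
      ¬ TreewidthAtMost G (s - 1) := by
  obtain ⟨-, hSL, hL, hstab, -, -, hnbr⟩ := hcon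
  obtain ⟨x, hx_inj, rfl, hx⟩ := hint
  obtain ⟨n, v, rfl⟩ := hL.exists_embedding
  let early : Fin (s + 1) → Fin (2 * s + 1) := Fin.castLE (by omega)
  let late : Fin s → Fin (2 * s + 1) := fun j => ⟨s + 1 + j, by omega⟩
  have early_lt_late : ∀ i j, early i < late j := fun i j => by
    simp only [early, late, Fin.lt_def, Fin.val_castLE]
    omega
  have late_inj : Function.Injective late := fun j j' h => Fin.ext (by simpa [late] using h)
  obtain ⟨σ, q, hq, hqx⟩ := exists_strictMono_attachments v (hx_inj.comp (Fin.castLE_injective _))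
    (hamp.mono (Set.range_comp_subset_range _ _)) fun k => by
      obtain ⟨_, ⟨r, rfl⟩, h⟩ := hnbr _ ⟨early k, rfl⟩
      exact ⟨r, h⟩
  have hhit : ∀ (t : Fin s) j,
      ∃ r ∈ Set.Ioo (q t.castSucc) (q t.succ), G.Adj (x (late j)) (v r) := fun t j =>
    IsInterruptedBy.exists_adj_Ioo v hx_inj hx hamp
      (((Fin.castLE_injective _).comp σ.injective).ne (Fin.castSucc_lt_succ (i := t)).ne)
      (early_lt_late _ _) (early_lt_late _ _) (hq (Fin.castSucc_lt_succ (i := t))).le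
      (hqx _) (hqx _)
  have hK := isInducedMinorOf_completeBipartiteGraph_of_segments v hq (y := x ∘ late)
    (hx_inj.comp late_inj) (fun j h => Set.disjoint_left.mp hSL ⟨late j, rfl⟩ h)
    (fun j j' h => hstab ⟨late j, rfl⟩ ⟨late j', rfl⟩ ((hx_inj.comp late_inj).ne h)) hhit
  exact ⟨hK, not_treewidthAtMost_of_isMinorOf_completeBipartiteGraph hs hK.isMinorOf⟩

theorem stmt_6 {V : Type u} [Fintype V] (G : SimpleGraph V) (s : ℕ) (hs : 1 ≤ s)
    (S L : Set V) (hcon : IsConstellation G S L (2 * s + 1))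
    (hamp : IsAmple G S L) (hint : IsInterrupted G S L (2 * s + 1)) :
    IsInducedMinorOf (completeBipartiteGraph (Fin s) (Fin s)) G ∧
      ¬ TreewidthAtMost G (s - 1) :=
  stmt_6_general G s hs S L hcon hamp hint
end

section
/- Every ample interrupted s-constellation is K_4-free and K_{3,3}-free. -/
open SimpleGraph

universe u v

/-! An induced path has neither triangles nor 4-cycles, since adjacent vertices have consecutive
positions along it. A clique meets the stable set `S` at most once, so a `K₄` would leave a
triangle on the path `L`. Stability and ampleness together forbid two vertices of `S` with a common
neighbour; each side of a `K_{3,3}` has a common neighbour, so each side has two vertices on `L`,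
and these four vertices form a 4-cycle on `L`. -/

namespace IsInducedPath

variable {V : Type u} {G : SimpleGraph V} {L : Set V}

theorem exists_index (hL : IsInducedPath G L) :
    ∃ f : L → ℕ, Function.Injective f ∧
      ∀ ⦃a b : L⦄, G.Adj a b → f a + 1 = f b ∨ f b + 1 = f a := by
  obtain ⟨n, -, ⟨e⟩⟩ := hL
  exact ⟨fun a => (e a).val, Fin.val_injective.comp e.injective,
    fun a b hab => pathGraph_adj.mp (e.map_adj_iff.mpr hab)⟩

theorem no_triangle (hL : IsInducedPath G L) {a b c : V} (ha : a ∈ L) (hb : b ∈ L) (hc : c ∈ L)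
    (hab : G.Adj a b) (hbc : G.Adj b c) (hac : G.Adj a c) : False := by
  obtain ⟨f, -, hf⟩ := hL.exists_index
  have := @hf ⟨a, ha⟩ ⟨b, hb⟩ hab
  have := @hf ⟨b, hb⟩ ⟨c, hc⟩ hbc
  have := @hf ⟨a, ha⟩ ⟨c, hc⟩ hac
  omega

theorem no_fourCycle (hL : IsInducedPath G L) {a₁ a₂ b₁ b₂ : V}
    (ha₁ : a₁ ∈ L) (ha₂ : a₂ ∈ L) (hb₁ : b₁ ∈ L) (hb₂ : b₂ ∈ L) (ha : a₁ ≠ a₂) (hb : b₁ ≠ b₂)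
    (h₁₁ : G.Adj a₁ b₁) (h₁₂ : G.Adj a₁ b₂) (h₂₁ : G.Adj a₂ b₁) (h₂₂ : G.Adj a₂ b₂) : False := by
  obtain ⟨f, hinj, hf⟩ := hL.exists_index
  have : f ⟨a₁, ha₁⟩ ≠ f ⟨a₂, ha₂⟩ := hinj.ne fun h => ha (congrArg Subtype.val h)
  have : f ⟨b₁, hb₁⟩ ≠ f ⟨b₂, hb₂⟩ := hinj.ne fun h => hb (congrArg Subtype.val h)
  have := @hf ⟨a₁, ha₁⟩ ⟨b₁, hb₁⟩ h₁₁
  have := @hf ⟨a₁, ha₁⟩ ⟨b₂, hb₂⟩ h₁₂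
  have := @hf ⟨a₂, ha₂⟩ ⟨b₁, hb₁⟩ h₂₁
  have := @hf ⟨a₂, ha₂⟩ ⟨b₂, hb₂⟩ h₂₂
  omega

end IsInducedPath

theorem exists_ne_not_of_subsingleton_setOf {ι : Type*} [Fintype ι] (hι : 2 < Fintype.card ι)
    {P : ι → Prop} (hP : {i | P i}.Subsingleton) : ∃ i j, i ≠ j ∧ ¬ P i ∧ ¬ P j := by
  classical
  have hfew : (Finset.univ.filter P).card ≤ 1 :=
    Finset.card_le_one.mpr fun i hi j hj => hP (by simpa using hi) (by simpa using hj)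
  have hmany : 1 < (Finset.univ.filter (¬ P ·)).card := by
    have := Finset.card_filter_add_card_filter_not (s := Finset.univ) P
    rw [Finset.card_univ] at this
    omega
  obtain ⟨i, hi, j, hj, hij⟩ := Finset.one_lt_card.mp hmany
  exact ⟨i, j, hij, (Finset.mem_filter.mp hi).2, (Finset.mem_filter.mp hj).2⟩

section Constellation

variable {V : Type u} {G : SimpleGraph V} {S L : Set V}

theorem IsAmple.no_common_neighbor (hamp : IsAmple G S L) (hstable : IsStableSet G S)
    (hSL : Sᶜ ⊆ L) {x y w : V} (hx : x ∈ S) (hy : y ∈ S) (hxy : x ≠ y)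
    (hxw : G.Adj x w) (hyw : G.Adj y w) : False :=
  have hw : w ∉ S := fun hw => hstable hx hw hxw.ne hxw
  hamp hx hy hxy (hSL hw) ⟨hxw, hyw⟩

theorem IsAmple.exists_pair_mem_of_common_neighbor (hamp : IsAmple G S L)
    (hstable : IsStableSet G S) (hSL : Sᶜ ⊆ L) {ι : Type*} [Fintype ι] (hι : 2 < Fintype.card ι)
    {c : ι → V} (hc : Function.Injective c) {w : V} (hw : ∀ i, G.Adj (c i) w) :
    ∃ i j, i ≠ j ∧ c i ∈ L ∧ c j ∈ L := by
  obtain ⟨i, j, hij, hi, hj⟩ := exists_ne_not_of_subsingleton_setOf hι (P := fun i => c i ∈ S)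
    fun i hi j hj => by_contra fun hij =>
      hamp.no_common_neighbor hstable hSL hi hj (hc.ne hij) (hw i) (hw j)
  exact ⟨i, j, hij, hSL hi, hSL hj⟩

theorem cliqueFree_four_of_isStableSet (hstable : IsStableSet G S) (hL : IsInducedPath G L)
    (hSL : Sᶜ ⊆ L) : G.CliqueFree 4 := by
  classical
  intro t ht
  obtain ⟨x, hxt, hrest⟩ : ∃ x ∈ t, ∀ y ∈ t.erase x, y ∈ L := by
    by_cases h : ∃ x ∈ t, x ∈ S
    · obtain ⟨x, hxt, hxS⟩ := h
      refine ⟨x, hxt, fun y hy => hSL fun hyS => ?_⟩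
      obtain ⟨hyx, hyt⟩ := Finset.mem_erase.mp hy
      exact hstable hyS hxS hyx (ht.1 hyt hxt hyx)
    · push Not at h
      obtain ⟨x, hxt⟩ := Finset.card_pos.mp (ht.2 ▸ by norm_num : 0 < t.card)
      exact ⟨x, hxt, fun y hy => hSL (h y (Finset.mem_of_mem_erase hy))⟩
  obtain ⟨a, b, c, hab, hac, hbc, habc⟩ := is3Clique_iff.mp (ht.erase_of_mem hxt)
  exact hL.no_triangle (hrest a (by simp [habc])) (hrest b (by simp [habc]))
    (hrest c (by simp [habc])) hab hbc hac

theorem IsAmple.not_completeBipartite_three_three_embedding (hamp : IsAmple G S L)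
    (hstable : IsStableSet G S) (hL : IsInducedPath G L) (hSL : Sᶜ ⊆ L)
    (φ : completeBipartiteGraph (Fin 3) (Fin 3) ↪g G) : False := by
  set a : Fin 3 → V := fun i => φ (Sum.inl i)
  set b : Fin 3 → V := fun j => φ (Sum.inr j)
  have hadj : ∀ i j, G.Adj (a i) (b j) := fun i j => φ.map_adj_iff.mpr (by simp)
  obtain ⟨i₁, i₂, hi, hi₁, hi₂⟩ := hamp.exists_pair_mem_of_common_neighbor hstable hSL
    (by simp) (φ.injective.comp Sum.inl_injective) (w := b 0) (hadj · 0)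
  obtain ⟨j₁, j₂, hj, hj₁, hj₂⟩ := hamp.exists_pair_mem_of_common_neighbor hstable hSL
    (by simp) (φ.injective.comp Sum.inr_injective) (w := a 0) fun j => (hadj 0 j).symm
  exact hL.no_fourCycle hi₁ hi₂ hj₁ hj₂ (φ.injective.ne (Sum.inl_injective.ne hi))
    (φ.injective.ne (Sum.inr_injective.ne hj)) (hadj _ _) (hadj _ _) (hadj _ _) (hadj _ _)

end Constellation

theorem stmt_7_general {V : Type u} (G : SimpleGraph V) (s : ℕ)
    (S L : Set V) (hcon : IsConstellation G S L s)
    (hamp : IsAmple G S L) :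
    G.CliqueFree 4 ∧
      ∀ X : Set V,
        ¬ Nonempty (G.induce X ≃g completeBipartiteGraph (Fin 3) (Fin 3)) := by
  obtain ⟨hcover, -, hL, hstable, -⟩ := hcon
  have hSL : Sᶜ ⊆ L := Set.compl_subset_iff_union.mpr hcover
  refine ⟨cliqueFree_four_of_isStableSet hstable hL hSL, fun X ⟨f⟩ => ?_⟩
  exact hamp.not_completeBipartite_three_three_embedding hstable hL hSL
    ((Embedding.induce X).comp f.symm.toEmbedding)

theorem stmt_7 {V : Type u} [Fintype V] (G : SimpleGraph V) (s : ℕ) (hs : 1 ≤ s)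
    (S L : Set V) (hcon : IsConstellation G S L s)
    (hamp : IsAmple G S L) (hint : IsInterrupted G S L s) :
    G.CliqueFree 4 ∧
      ∀ X : Set V,
        ¬ Nonempty (G.induce X ≃g completeBipartiteGraph (Fin 3) (Fin 3)) :=
  stmt_7_general G s S L hcon hamp
end

section
/- Let 𝔠 = (S, L) be an ample interrupted s-constellation for some s ∈ ℕ. Then for every two anticomplete induced subgraphs X_1, X_2 of 𝔠, there exists i ∈ {1,2} such that each connected component of X_i intersects S in at most one vertex. -/
open SimpleGraph

universe u v

/-!
A shortest walk inside `X` between two distinct vertices of `S` is an induced path whose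
interior avoids `S`, so its interior lies in `L`. If both `X₁` and `X₂` contained such paths,
from `x_i` to `x_j` and from `x_i'` to `x_j'` with `i < j`, `i' < j'` and say `j < j'`, then by
interruption `x_j' ∈ X₂` would have a neighbour in the interior of the first path, which lies
in `X₁`; and `j = j'` would contradict the disjointness of `X₁` and `X₂`.
-/

namespace SimpleGraph.Walk

variable {V : Type u} {G : SimpleGraph V} {u v : V}

theorem exists_shorter_of_adj_getVert_s8 {p : G.Walk u v} {i j : ℕ} (hij : i + 2 ≤ j)
    (hj : j ≤ p.length) (hadj : G.Adj (p.getVert i) (p.getVert j)) :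
    ∃ q : G.Walk u v, q.length < p.length ∧ q.support ⊆ p.support := by
  refine ⟨(p.take i).append (cons hadj (p.drop j)), ?_, ?_⟩
  · simp only [length_append, take_length, length_cons, drop_length]
    omega
  · intro z hz
    rw [mem_support_append_iff, support_cons, List.mem_cons] at hz
    rcases hz with hz | rfl | hz
    · rw [support_take] at hz
      exact List.mem_of_mem_take hz
    · exact getVert_mem_support p i
    · rw [drop_support_eq_support_drop_min] at hz
      exact List.mem_of_mem_drop hz

theorem IsChord.exists_shorter {p : G.Walk u v} {e : Sym2 V} (he : p.IsChord e) :
    ∃ q : G.Walk u v, q.length < p.length ∧ q.support ⊆ p.support := by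
  induction e using Sym2.ind with
  | h a b =>
  obtain ⟨hab, hnot, ha, hb⟩ := isChord_sym2Mk.mp he
  obtain ⟨i, rfl, hi⟩ := mem_support_iff_exists_getVert.mp ha
  obtain ⟨j, rfl, hj⟩ := mem_support_iff_exists_getVert.mp hb
  have hne : i ≠ j := by rintro rfl; exact hab.ne rfl
  have hsucc : i + 1 ≠ j ∧ j + 1 ≠ i := by
    constructor <;> rintro rfl
    · exact hnot ((mk_mem_edges_iff_exists p).mpr ⟨i, by omega, rfl⟩)
    · exact hnot ((mk_mem_edges_iff_exists p).mpr ⟨j, by omega, Sym2.eq_swap⟩)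
  rcases Nat.lt_or_gt_of_ne hne with hlt | hlt
  · exact exists_shorter_of_adj_getVert_s8 (by omega) hj hab
  · exact exists_shorter_of_adj_getVert_s8 (by omega) hi hab.symm

theorem isChordless_of_forall_length_le {p : G.Walk u v}
    (hmin : ∀ q : G.Walk u v, q.support ⊆ p.support → p.length ≤ q.length) : p.IsChordless :=
  fun _ he ↦ by
    obtain ⟨q, hlt, hsub⟩ := he.exists_shorter
    exact (hmin q hsub).not_gt hlt

theorem isPath_of_forall_length_le {p : G.Walk u v}
    (hmin : ∀ q : G.Walk u v, q.support ⊆ p.support → p.length ≤ q.length) : p.IsPath := by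
  classical
  rw [← bypass_eq_self_of_length_le_length_bypass p (hmin _ p.support_bypass_subset_support)]
  exact p.bypass_isPath

end SimpleGraph.Walk

section

variable {V : Type u} {G : SimpleGraph V} {S : Set V}

theorem isPathIn_of_isPath_of_isChordless {x y : V} {R : G.Walk x y} (hpath : R.IsPath)
    (hchord : R.IsChordless) : IsPathIn G R := by
  classical
  refine ⟨hpath, R.length + 1, R.length.succ_pos, ?_⟩
  let e : G.induce {z | z ∈ R.support} ≃g R.toSubgraph.coe :=
    { toEquiv := Equiv.setCongr R.verts_toSubgraph.symm
      map_rel_iff' := (Walk.isInduced_toSubgraph.mpr hchord).adj }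
  exact ⟨hpath.pathGraphIsoToSubgraph.symm.comp e⟩

theorem IsRoute.reverse {x y : V} {R : G.Walk x y} (hR : IsRoute G S R) :
    IsRoute G S R.reverse := by
  obtain ⟨hx, hy, hxy, ⟨hpath, hind⟩, hint⟩ := hR
  have hsupp : {z | z ∈ R.reverse.support} = {z | z ∈ R.support} := by
    simp only [Walk.support_reverse, List.mem_reverse]
  refine ⟨hy, hx, hxy.symm, ⟨hpath.reverse, hsupp ▸ hind⟩, ?_⟩
  rintro z ⟨hz, hzy, hzx⟩
  exact hint ⟨by simpa using hz, hzx, hzy⟩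

theorem exists_isRoute_of_walk (X : Set V) {a b : V} (ha : a ∈ S) (hb : b ∈ S) (hab : a ≠ b)
    (w : G.Walk a b) (hw : ∀ z ∈ w.support, z ∈ X) :
    ∃ (x y : V) (R : G.Walk x y), IsRoute G S R ∧ ∀ z ∈ R.support, z ∈ X := by
  classical
  let HasLinkOfLength : ℕ → Prop := fun n ↦ ∃ (x y : V) (R : G.Walk x y),
    x ∈ S ∧ y ∈ S ∧ x ≠ y ∧ (∀ z ∈ R.support, z ∈ X) ∧ R.length = n
  have hex : ∃ n, HasLinkOfLength n := ⟨_, a, b, w, ha, hb, hab, hw, rfl⟩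
  obtain ⟨x, y, R, hx, hy, hxy, hRX, hlen⟩ := Nat.find_spec hex
  have hmin : ∀ {x' y' : V} (R' : G.Walk x' y'), x' ∈ S → y' ∈ S → x' ≠ y' →
      (∀ z ∈ R'.support, z ∈ X) → R.length ≤ R'.length := fun R' hx' hy' hxy' hR'X ↦
    hlen ▸ Nat.find_min' hex ⟨_, _, R', hx', hy', hxy', hR'X, rfl⟩
  have hshort : ∀ q : G.Walk x y, q.support ⊆ R.support → R.length ≤ q.length :=
    fun q hq ↦ hmin q hx hy hxy fun z hz ↦ hRX z (hq hz)
  refine ⟨x, y, R, ⟨hx, hy, hxy, isPathIn_of_isPath_of_isChordless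
    (Walk.isPath_of_forall_length_le hshort) (Walk.isChordless_of_forall_length_le hshort),
    ?_⟩, hRX⟩
  rintro z ⟨hz, hzx, hzy⟩ hzS
  exact (hmin (R.takeUntil z hz) hx hzS hzx.symm fun t ht ↦
    hRX t (R.support_takeUntil_subset_support hz ht)).not_gt
      (Walk.length_takeUntil_lt_length hz hzy)

theorem exists_ordered_route_of_reachable {s : ℕ} {L X : Set V} (hSL : S ∪ L = Set.univ)
    {x : Fin s → V} (hx : Set.range x = S) {a b : X} (ha : (a : V) ∈ S) (hb : (b : V) ∈ S)
    (hab : a ≠ b) (hreach : (G.induce X).Reachable a b) :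
    ∃ i j, i < j ∧ ∃ R : G.Walk (x i) (x j),
      IsPathIn G R ∧ interiorSet G R ⊆ L ∧ ∀ z ∈ R.support, z ∈ X := by
  obtain ⟨w⟩ := hreach
  have hwX : ∀ z ∈ (w.map (Embedding.induce X).toHom).support, z ∈ X := by
    intro z hz
    rw [Walk.support_map, List.mem_map] at hz
    obtain ⟨z, -, rfl⟩ := hz
    exact z.2
  obtain ⟨_, _, R, hR, hRX⟩ :=
    exists_isRoute_of_walk X ha hb (Subtype.coe_ne_coe.mpr hab) _ hwX
  have hL : Sᶜ ⊆ L := Set.compl_subset_iff_union.mpr hSL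
  obtain ⟨i, rfl⟩ : _ ∈ Set.range x := hx ▸ hR.1
  obtain ⟨j, rfl⟩ : _ ∈ Set.range x := hx ▸ hR.2.1
  have hij : i ≠ j := fun h ↦ hR.2.2.1 (congrArg x h)
  rcases hij.lt_or_gt with hlt | hlt
  · exact ⟨i, j, hlt, R, hR.2.2.2.1, hR.2.2.2.2.trans hL, hRX⟩
  · obtain ⟨-, -, -, hpath, hint⟩ := hR.reverse
    exact ⟨j, i, hlt, R.reverse, hpath, hint.trans hL, by simpa using hRX⟩

end

theorem stmt_8_general {V : Type u} (G : SimpleGraph V) (s : ℕ)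
    (S L : Set V) (hcon : IsConstellation G S L s)
    (hint : IsInterrupted G S L s)
    (X₁ X₂ : Set V) (hanti : Anticomplete G X₁ X₂) :
    (∀ a b : X₁, (a : V) ∈ S → (b : V) ∈ S → (G.induce X₁).Reachable a b → a = b) ∨
    (∀ a b : X₂, (a : V) ∈ S → (b : V) ∈ S → (G.induce X₂).Reachable a b → a = b) := by
  obtain ⟨x, -, hx, hinterrupt⟩ := hint
  by_contra! h
  obtain ⟨⟨a₁, b₁, ha₁, hb₁, hr₁, hne₁⟩, ⟨a₂, b₂, ha₂, hb₂, hr₂, hne₂⟩⟩ := h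
  obtain ⟨i₁, j₁, hij₁, R₁, hR₁, hL₁, hX₁⟩ :=
    exists_ordered_route_of_reachable hcon.1 hx ha₁ hb₁ hne₁ hr₁
  obtain ⟨i₂, j₂, hij₂, R₂, hR₂, hL₂, hX₂⟩ :=
    exists_ordered_route_of_reachable hcon.1 hx ha₂ hb₂ hne₂ hr₂
  have hend₁ := hX₁ _ R₁.end_mem_support
  have hend₂ := hX₂ _ R₂.end_mem_support
  rcases lt_trichotomy j₁ j₂ with hlt | rfl | hlt
  · obtain ⟨z, hz, hadj⟩ := hinterrupt hij₁ hlt R₁ hR₁ hL₁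
    exact hanti.2 (hX₁ z hz.1) hend₂ hadj.symm
  · exact hanti.1.ne_of_mem hend₁ hend₂ rfl
  · obtain ⟨z, hz, hadj⟩ := hinterrupt hij₂ hlt R₂ hR₂ hL₂
    exact hanti.2 hend₁ (hX₂ z hz.1) hadj

theorem stmt_8 {V : Type u} [Fintype V] (G : SimpleGraph V) (s : ℕ) (hs : 1 ≤ s)
    (S L : Set V) (hcon : IsConstellation G S L s)
    (hamp : IsAmple G S L) (hint : IsInterrupted G S L s)
    (X₁ X₂ : Set V) (hanti : Anticomplete G X₁ X₂) :
    (∀ a b : X₁, (a : V) ∈ S → (b : V) ∈ S → (G.induce X₁).Reachable a b → a = b) ∨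
    (∀ a b : X₂, (a : V) ∈ S → (b : V) ∈ S → (G.induce X₂).Reachable a b → a = b) :=
  stmt_8_general G s S L hcon hint X₁ X₂ hanti
end

section
/- For every c ∈ ℕ, every proper subdivision of the complete graph K_{2c+2} contains two anticomplete induced subgraphs, each isomorphic to a subdivision of K_{c+1}. -/
open SimpleGraph

universe u v

/-!
Split the `2c + 2` branch vertices into two halves of `c + 1` vertices each. For a set `U` of
branch vertices, the branch vertices of `U` together with the subdivision paths joining them
induce a subdivision of the graph induced on `U`. Since the subdivision paths are internally
disjoint, two such sets for disjoint `U₁` and `U₂` can meet, or be joined by an edge, only at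
branch vertices; they share none because `U₁` and `U₂` are disjoint, and branch vertices are
pairwise non-adjacent because every edge is subdivided.
-/

namespace SimpleGraph.Walk

variable {V : Type u} {G : SimpleGraph V} {s : Set V} {u w : V}

lemma mem_support_induce_iff (p : G.Walk u w) (hp : ∀ x ∈ p.support, x ∈ s) {z : s} :
    z ∈ (p.induce s hp).support ↔ (z : V) ∈ p.support := by
  simp

lemma mem_edges_induce_iff (p : G.Walk u w) (hp : ∀ x ∈ p.support, x ∈ s) {x y : s} :
    s(x, y) ∈ (p.induce s hp).edges ↔ s((x : V), (y : V)) ∈ p.edges := by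
  have hmap := (p.induce s hp).edges_map (Embedding.induce s).toHom
  rw [map_induce] at hmap
  erw [hmap]
  exact (List.mem_map_of_injective (Sym2.map.injective Subtype.val_injective)).symm

end SimpleGraph.Walk

section SubdivisionModel

variable {W : Type v} {V : Type u} {H : SimpleGraph W} {G : SimpleGraph V} {f : W → V}
  {P : ∀ ⦃a b : W⦄, H.Adj a b → G.Walk (f a) (f b)}

def spannedSet (P : ∀ ⦃a b : W⦄, H.Adj a b → G.Walk (f a) (f b)) (U : Set W) : Set V :=
  f '' U ∪ {x | ∃ a ∈ U, ∃ b ∈ U, ∃ h : H.Adj a b, x ∈ (P h).support}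

lemma support_subset_spannedSet {U : Set W} {a b : W} (ha : a ∈ U) (hb : b ∈ U)
    (h : H.Adj a b) {x : V} (hx : x ∈ (P h).support) : x ∈ spannedSet P U :=
  Or.inr ⟨a, ha, b, hb, h, hx⟩

lemma IsSubdivisionModel.mem_image_of_mem_spannedSet (hmod : IsSubdivisionModel H G f P)
    {U : Set W} {x : V} (hx : x ∈ spannedSet P U) (hxf : x ∈ Set.range f) : x ∈ f '' U := by
  obtain ⟨-, -, -, hends, -⟩ := hmod
  rcases hx with hx | ⟨a, ha, b, hb, h, hx⟩
  · exact hx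
  · rcases hends h x hx hxf with rfl | rfl
    exacts [⟨a, ha, rfl⟩, ⟨b, hb, rfl⟩]

lemma IsSubdivisionModel.mem_range_of_mem_spannedSet (hmod : IsSubdivisionModel H G f P)
    {U : Set W} {a b : W} (h : H.Adj a b) (hab : ¬ (a ∈ U ∧ b ∈ U)) {x : V}
    (hx : x ∈ spannedSet P U) (hxP : x ∈ (P h).support) : x ∈ Set.range f := by
  obtain ⟨-, -, -, -, hdisj, -⟩ := hmod
  rcases hx with ⟨a', -, rfl⟩ | ⟨a', ha', b', hb', h', hx⟩
  · exact ⟨a', rfl⟩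
  · refine hdisj h h' (fun he => hab ?_) x hxP hx
    rcases Sym2.eq_iff.mp he with ⟨rfl, rfl⟩ | ⟨rfl, rfl⟩
    exacts [⟨ha', hb'⟩, ⟨hb', ha'⟩]

lemma IsSubdivisionModel.not_adj_of_mem_range (hmod : IsSubdivisionModel H G f P)
    (hprop : ∀ ⦃a b⦄ (h : H.Adj a b), 2 ≤ (P h).length)
    {x y : V} (hx : x ∈ Set.range f) (hy : y ∈ Set.range f) : ¬ G.Adj x y := by
  obtain ⟨-, hpath, -, hends, -, -, hedges⟩ := hmod
  intro hxy
  obtain ⟨a, b, h, hmem⟩ := hedges s(x, y) hxy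
  have hx' := hends h x ((P h).fst_mem_support_of_mem_edges hmem) hx
  have hy' := hends h y ((P h).snd_mem_support_of_mem_edges hmem) hy
  have hedge : s(f a, f b) ∈ (P h).edges := by
    rcases hx' with rfl | rfl <;> rcases hy' with rfl | rfl
    · exact absurd rfl hxy.ne
    · exact hmem
    · rwa [Sym2.eq_swap]
    · exact absurd rfl hxy.ne
  have := (hpath h).length_eq_one_of_mem_edges hedge
  have := hprop h
  omega

lemma IsSubdivisionModel.disjoint_spannedSet (hmod : IsSubdivisionModel H G f P)
    {U₁ U₂ : Set W} (hU : Disjoint U₁ U₂) : Disjoint (spannedSet P U₁) (spannedSet P U₂) := by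
  have ⟨hinj, _⟩ := hmod
  rw [Set.disjoint_left]
  intro x hx₁ hx₂
  have hxf : x ∈ Set.range f := by
    rcases hx₁ with ⟨a, -, rfl⟩ | ⟨a, ha, b, -, h, hx⟩
    · exact ⟨a, rfl⟩
    · exact hmod.mem_range_of_mem_spannedSet h (fun hab => hU.notMem_of_mem_left ha hab.1) hx₂ hx
  exact (hU.image hinj.injOn Set.subset_union_left Set.subset_union_right).notMem_of_mem_left
    (hmod.mem_image_of_mem_spannedSet hx₁ hxf) (hmod.mem_image_of_mem_spannedSet hx₂ hxf)

lemma IsSubdivisionModel.anticomplete_spannedSet (hmod : IsSubdivisionModel H G f P)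
    (hprop : ∀ ⦃a b⦄ (h : H.Adj a b), 2 ≤ (P h).length)
    {U₁ U₂ : Set W} (hU : Disjoint U₁ U₂) :
    Anticomplete G (spannedSet P U₁) (spannedSet P U₂) := by
  have ⟨_, _, _, _, _, _, hedges⟩ := hmod
  have hdisj := hmod.disjoint_spannedSet hU
  refine ⟨hdisj, fun x hx₁ y hy₂ hxy => ?_⟩
  obtain ⟨a, b, h, hmem⟩ := hedges s(x, y) hxy
  have hxP := (P h).fst_mem_support_of_mem_edges hmem
  have hyP := (P h).snd_mem_support_of_mem_edges hmem
  by_cases h₁ : a ∈ U₁ ∧ b ∈ U₁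
  · exact hdisj.notMem_of_mem_left (support_subset_spannedSet h₁.1 h₁.2 h hyP) hy₂
  by_cases h₂ : a ∈ U₂ ∧ b ∈ U₂
  · exact hdisj.notMem_of_mem_left hx₁ (support_subset_spannedSet h₂.1 h₂.2 h hxP)
  exact hmod.not_adj_of_mem_range hprop (hmod.mem_range_of_mem_spannedSet h h₁ hx₁ hxP)
    (hmod.mem_range_of_mem_spannedSet h h₂ hy₂ hyP) hxy

/-- Otherwise both ends of the edge `xy` would be branch vertices of `U` on the path of `ab`,
hence `f a` and `f b`. -/
lemma IsSubdivisionModel.mem_of_mem_edges_of_mem_spannedSet (hmod : IsSubdivisionModel H G f P)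
    {U : Set W} {a b : W} (h : H.Adj a b) {x y : V} (hmem : s(x, y) ∈ (P h).edges)
    (hx : x ∈ spannedSet P U) (hy : y ∈ spannedSet P U) (hxy : x ≠ y) : a ∈ U ∧ b ∈ U := by
  have ⟨hinj, _, _, hends, _⟩ := hmod
  by_contra hab
  have hxP := (P h).fst_mem_support_of_mem_edges hmem
  have hyP := (P h).snd_mem_support_of_mem_edges hmem
  obtain ⟨x', hx', rfl⟩ :=
    hmod.mem_image_of_mem_spannedSet hx (hmod.mem_range_of_mem_spannedSet h hab hx hxP)
  obtain ⟨y', hy', rfl⟩ :=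
    hmod.mem_image_of_mem_spannedSet hy (hmod.mem_range_of_mem_spannedSet h hab hy hyP)
  rcases hends h _ hxP ⟨x', rfl⟩ with hxa | hxa <;>
    rcases hends h _ hyP ⟨y', rfl⟩ with hyb | hyb <;>
    rw [hinj.eq_iff] at hxa hyb <;> subst hxa hyb
  exacts [hxy rfl, hab ⟨hx', hy'⟩, hab ⟨hy', hx'⟩, hxy rfl]

/-- `φ` has to be an induced embedding: the path of every edge of `H` between vertices of
`φ(H')` lies in the spanned set. -/
lemma IsSubdivisionModel.isSubdivisionOf_induce_spannedSet (hmod : IsSubdivisionModel H G f P)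
    {W' : Type*} {H' : SimpleGraph W'} (φ : H' ↪g H) :
    IsSubdivisionOf H' (G.induce (spannedSet P (Set.range φ))) := by
  have ⟨hinj, hpath, hsymm, hends, hdisj, _, hedges⟩ := hmod
  set X := spannedSet P (Set.range φ)
  have hφ : ∀ {a b : W'}, H'.Adj a b → H.Adj (φ a) (φ b) := φ.map_adj_iff.mpr
  have hsupp : ∀ {a b : W'} (h : H'.Adj a b), ∀ x ∈ (P (hφ h)).support, x ∈ X :=
    fun h _ hx => support_subset_spannedSet (Set.mem_range_self _) (Set.mem_range_self _) (hφ h) hx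
  let f' : W' → X := fun a => ⟨f (φ a), Or.inl ⟨φ a, ⟨a, rfl⟩, rfl⟩⟩
  have hrange' : ∀ {x : X}, (x : V) ∈ Set.range f → x ∈ Set.range f' := by
    intro x hxf
    obtain ⟨_, ⟨a, rfl⟩, hx⟩ := hmod.mem_image_of_mem_spannedSet x.2 hxf
    exact ⟨a, Subtype.ext hx⟩
  refine ⟨f', fun a b h => (P (hφ h)).induce X (hsupp h), fun a b hab => ?_, fun a b h => ?_,
    fun a b h => ?_, fun a b h x hx hxf => ?_, fun a b h a' b' h' hne x hx hx' => ?_,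
    fun x => ?_, fun e he => ?_⟩
  · exact φ.injective (hinj (congrArg Subtype.val hab))
  · exact .of_map (f := (Embedding.induce X).toHom) (by rw [Walk.map_induce]; exact hpath _)
  · refine Walk.map_injective_of_injective (f := (Embedding.induce X).toHom)
      Subtype.val_injective _ _ ?_
    rw [Walk.map_induce, ← Walk.reverse_map, Walk.map_induce]
    exact hsymm (hφ h)
  · obtain ⟨c, rfl⟩ := hxf
    rcases hends (hφ h) _ ((Walk.mem_support_induce_iff _ _).mp hx) ⟨φ c, rfl⟩ with he | he
    exacts [.inl (Subtype.ext he), .inr (Subtype.ext he)]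
  · refine hrange' (hdisj (hφ h) (hφ h') (fun he => hne ?_) _
      ((Walk.mem_support_induce_iff _ _).mp hx) ((Walk.mem_support_induce_iff _ _).mp hx'))
    rcases Sym2.eq_iff.mp he with ⟨h₁, h₂⟩ | ⟨h₁, h₂⟩
    · rw [φ.injective h₁, φ.injective h₂]
    · rw [φ.injective h₁, φ.injective h₂, Sym2.eq_swap]
  · rcases x.2 with ⟨_, ⟨a, rfl⟩, hx⟩ | ⟨_, ⟨a, rfl⟩, _, ⟨b, rfl⟩, h, hx⟩
    · exact .inl ⟨a, Subtype.ext hx⟩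
    · exact .inr ⟨a, b, φ.map_adj_iff.mp h, (Walk.mem_support_induce_iff _ _).mpr hx⟩
  · induction e using Sym2.ind with
    | _ x y =>
    have hxy : G.Adj x y := he
    obtain ⟨a, b, h, hmem⟩ := hedges s((x : V), y) hxy
    obtain ⟨⟨a, rfl⟩, ⟨b, rfl⟩⟩ := hmod.mem_of_mem_edges_of_mem_spannedSet h hmem x.2 y.2 hxy.ne
    exact ⟨a, b, φ.map_adj_iff.mp h, (Walk.mem_edges_induce_iff _ _).mpr hmem⟩

end SubdivisionModel

theorem stmt_10_general {V : Type u} (c : ℕ) (G : SimpleGraph V)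
    (h : IsProperSubdivisionOf (completeGraph (Fin (2 * c + 2))) G) :
    ∃ X Y : Set V, Anticomplete G X Y ∧
      IsSubdivisionOf (completeGraph (Fin (c + 1))) (G.induce X) ∧
      IsSubdivisionOf (completeGraph (Fin (c + 1))) (G.induce Y) := by
  obtain ⟨f, P, hmod, hprop⟩ := h
  have hle : c + 1 ≤ 2 * c + 2 := by omega
  have hdisj : Disjoint (Set.range (Fin.castLEEmb hle)) (Set.range (Fin.natAdd_castLEEmb hle)) := by
    rw [Set.disjoint_left, Fin.range_natAdd_castLEEmb]
    rintro _ ⟨i, rfl⟩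
    simp only [Fin.coe_castLEEmb, Set.mem_ofPred_eq, Fin.val_castLE, not_le]
    omega
  exact ⟨_, _, hmod.anticomplete_spannedSet hprop hdisj,
    hmod.isSubdivisionOf_induce_spannedSet (Embedding.completeGraph (Fin.castLEEmb hle)),
    hmod.isSubdivisionOf_induce_spannedSet (Embedding.completeGraph (Fin.natAdd_castLEEmb hle))⟩

theorem stmt_10 {V : Type u} [Fintype V] (c : ℕ) (hc : 1 ≤ c) (G : SimpleGraph V)
    (h : IsProperSubdivisionOf (completeGraph (Fin (2 * c + 2))) G) :
    ∃ X Y : Set V, Anticomplete G X Y ∧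
      IsSubdivisionOf (completeGraph (Fin (c + 1))) (G.induce X) ∧
      IsSubdivisionOf (completeGraph (Fin (c + 1))) (G.induce Y) :=
  stmt_10_general c G h
end

section
/- Let d, α, ρ, σ ∈ ℕ and let θ = α^{2(σ−1)}·(d(σ−1)+ρ). Let G be a graph and let M = (A_1,…,A_θ; B) be a B-linear (θ,1)-model in G such that every vertex of B has neighbors in at most d of the sets A_1,…,A_θ. Then either (a) there exist indices i_1 < ⋯ < i_α in {1,…,θ} and a subpath B' of B such that (A_{i_1},…,A_{i_α}; B') is an A-aligned (α,1)-model in G, or (b) there is a B-induced (ρ,σ)-model (A''_1,…,A''_ρ; B''_1,…,B''_σ) in G with each A''_i ∈ {A_1,…,A_θ} and all B''_j contained in B. -/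
/-!
Number the vertices of `B` as `0, …, N` along the path and let `T i` be the set of positions at
which `A i` has neighbours. Inside a window `[a, b]` look at the spans `[lo i, hi i]` of the sets
`T i`. If `α²` spans are pairwise disjoint, Erdős–Szekeres picks `α` of them with increasing
indices whose spans appear in monotone order along `B`: an `A`-aligned model on the subpath
`[a, b]`. Otherwise fewer than `α²` points pierce all spans, so some point `p` lies in the spans
of a `1/α²` fraction of the sets; at most `d` of them attach at `p`, and the others attach both to
`[a, p - 1]` and to `[p + 1, b]`. Keeping `[a, p - 1]` as a `B`-path and recursing into
`[p + 1, b]` `σ - 1` times produces `σ` pairwise anticomplete subpaths met by `ρ` common sets;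
each round costs a factor `α²` and an additive `d`, whence `θ = α^{2(σ-1)} (d(σ-1) + ρ)`.
-/

open SimpleGraph

universe u v

open Finset

theorem Finset.exists_strictMonoOn_or_strictAntiOn {ι γ : Type*} [LinearOrder ι] [LinearOrder γ]
    {f : ι → γ} {s : Finset ι} {r q : ℕ} (hf : Set.InjOn f s) (hs : r * q < #s) :
    (∃ t ⊆ s, r < #t ∧ StrictMonoOn f t) ∨ ∃ t ⊆ s, q < #t ∧ StrictAntiOn f t := by
  classical
  -- `L i` is the length of a longest increasing run ending at `i`; `f` decreases on each level
  -- set of `L`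
  set chains : ι → Finset (Finset ι) := fun i =>
    {t ∈ s.powerset | i ∈ t ∧ (∀ x ∈ t, x ≤ i) ∧ StrictMonoOn f t} with hchains
  set L : ι → ℕ := fun i => (chains i).sup card
  have singleton_mem : ∀ i ∈ s, {i} ∈ chains i := fun i hi => by simp [hchains, hi]
  have exists_longest : ∀ i ∈ s, ∃ t ∈ chains i, L i = #t := fun i hi =>
    exists_mem_eq_sup _ ⟨_, singleton_mem i hi⟩ _
  have L_lt : ∀ i ∈ s, ∀ j ∈ s, i < j → f i < f j → L i < L j := by
    intro i hi j hj hij hfij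
    obtain ⟨t, ht, hLt⟩ := exists_longest i hi
    simp only [hchains, mem_filter, mem_powerset] at ht
    obtain ⟨hts, hit, hti, htf⟩ := ht
    have hjt : j ∉ t := fun hjt => (hti j hjt).not_gt hij
    have hchain : insert j t ∈ chains j := by
      simp only [hchains, mem_filter, mem_powerset, mem_insert, true_or, forall_eq_or_imp,
        le_refl, true_and, coe_insert]
      refine ⟨insert_subset hj hts, fun x hx => (hti x hx).trans hij.le, ?_⟩
      have hlt : ∀ x ∈ t, f x < f j := fun x hx =>
        (htf.monotoneOn hx hit (hti x hx)).trans_lt hfij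
      intro x hx y hy hxy
      rcases hx with rfl | hx <;> rcases hy with rfl | hy
      · exact absurd hxy (lt_irrefl _)
      · exact absurd ((hti y hy).trans hij.le) hxy.not_ge
      · exact hlt x hx
      · exact htf hx hy hxy
    calc L i < #(insert j t) := by rw [hLt, card_insert_of_notMem hjt]; omega
      _ ≤ L j := le_sup hchain
  by_cases hlong : ∃ i ∈ s, r < L i
  · obtain ⟨i, hi, hri⟩ := hlong
    obtain ⟨t, ht, hLt⟩ := exists_longest i hi
    simp only [hchains, mem_filter, mem_powerset] at ht
    exact Or.inl ⟨t, ht.1, hLt ▸ hri, ht.2.2.2⟩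
  push Not at hlong
  have hmaps : ∀ i ∈ s, L i ∈ Icc 1 r := fun i hi =>
    mem_Icc.2 ⟨le_sup (f := card) (singleton_mem i hi), hlong i hi⟩
  obtain ⟨y, -, hy⟩ := exists_lt_card_fiber_of_mul_lt_card_of_maps_to hmaps (by simpa using hs)
  refine Or.inr ⟨_, filter_subset _ _, hy, fun i hi j hj hij => ?_⟩
  simp only [coe_filter] at hi hj
  refine (lt_or_gt_of_ne fun h => hij.ne (hf hi.1 hj.1 h)).resolve_left fun h => ?_
  exact (L_lt i hi.1 j hj.1 hij h).ne (hi.2.trans hj.2.symm)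

theorem Finset.exists_pairwise_disjoint_or_exists_piercing {ι : Type*} (lo hi : ι → ℕ)
    (m : ℕ) (F : Finset ι) (hF : ∀ i ∈ F, lo i ≤ hi i) :
    (∃ S ⊆ F, #S = m ∧ (S : Set ι).Pairwise fun i j => hi i < lo j ∨ hi j < lo i) ∨
      ∃ P : Finset ℕ, #P < m ∧ ∀ i ∈ F, ∃ p ∈ P, lo i ≤ p ∧ p ≤ hi i := by
  classical
  induction m generalizing F with
  | zero => exact Or.inl ⟨∅, empty_subset _, rfl, by simp⟩
  | succ m ih =>
    rcases F.eq_empty_or_nonempty with rfl | hne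
    · exact Or.inr ⟨∅, by simp, by simp⟩
    -- greedy: the interval ending first is pierced at its right end
    obtain ⟨i₀, hi₀, hmin⟩ := F.exists_min_image hi hne
    have hF' : ∀ i ∈ {i ∈ F | hi i₀ < lo i}, lo i ≤ hi i := fun i h => hF i (mem_filter.1 h).1
    rcases ih _ hF' with ⟨S, hSF, hS, hdisj⟩ | ⟨P, hP, hcov⟩
    · have hi₀S : i₀ ∉ S := fun h => by
        have := hF i₀ hi₀; have := (mem_filter.1 (hSF h)).2; omega
      refine Or.inl ⟨insert i₀ S, insert_subset hi₀ (hSF.trans (filter_subset _ _)),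
        by rw [card_insert_of_notMem hi₀S, hS], ?_⟩
      rw [coe_insert]
      refine hdisj.insert fun j hj _ => ?_
      have hj := (mem_filter.1 (hSF hj)).2
      exact ⟨Or.inl hj, Or.inr hj⟩
    · refine Or.inr ⟨insert (hi i₀) P, (card_insert_le _ _).trans_lt (by omega), fun i hiF => ?_⟩
      by_cases hlo : lo i ≤ hi i₀
      · exact ⟨hi i₀, mem_insert_self _ _, hlo, hmin i hiF⟩
      · obtain ⟨p, hp, hpi⟩ := hcov i (mem_filter.2 ⟨hiF, by omega⟩)
        exact ⟨p, mem_insert_of_mem hp, hpi⟩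

theorem exists_strictMono_ordered_of_pairwise_disjoint {ι : Type*} [LinearOrder ι]
    {lo hi : ι → ℕ} {S : Finset ι} {α : ℕ} (hα : 1 ≤ α) (hS : α * α ≤ #S)
    (hlohi : ∀ i ∈ S, lo i ≤ hi i)
    (hdisj : (S : Set ι).Pairwise fun i j => hi i < lo j ∨ hi j < lo i) :
    ∃ g : Fin α → ι, StrictMono g ∧ (∀ t, g t ∈ S) ∧
      ((∀ t t', t < t' → hi (g t) < lo (g t')) ∨ ∀ t t', t < t' → hi (g t') < lo (g t)) := by
  have hbefore : ∀ i ∈ S, ∀ j ∈ S, lo i < lo j → hi i < lo j := fun i hi' j hj hij => by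
    have := hlohi j hj
    exact (hdisj hi' hj (by rintro rfl; omega)).resolve_right (by omega)
  have hinj : Set.InjOn lo S := fun i hi' j hj hij => by
    by_contra hne
    have := hlohi i hi'; have := hlohi j hj; have := hdisj hi' hj hne; omega
  have hlt : (α - 1) * (α - 1) < #S := lt_of_lt_of_le (Nat.mul_self_lt_mul_self (by omega)) hS
  obtain ⟨t, htS, ht, hord⟩ : ∃ t ⊆ S, α ≤ #t ∧ (StrictMonoOn lo t ∨ StrictAntiOn lo t) := by
    rcases exists_strictMonoOn_or_strictAntiOn hinj hlt with ⟨t, htS, ht, h⟩ | ⟨t, htS, ht, h⟩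
    exacts [⟨t, htS, by omega, .inl h⟩, ⟨t, htS, by omega, .inr h⟩]
  let g := t.orderEmbOfCardLe ht
  have hgS : ∀ u, g u ∈ S := fun u => htS (t.orderEmbOfCardLe_mem ht u)
  refine ⟨g, g.strictMono, hgS, hord.imp (fun hmono u v huv => ?_) fun hanti u v huv => ?_⟩
  · exact hbefore _ (hgS u) _ (hgS v)
      (hmono (t.orderEmbOfCardLe_mem ht u) (t.orderEmbOfCardLe_mem ht v) (g.strictMono huv))
  · exact hbefore _ (hgS v) _ (hgS u)
      (hanti (t.orderEmbOfCardLe_mem ht u) (t.orderEmbOfCardLe_mem ht v) (g.strictMono huv))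

-- `T i ⊆ ℕ` stands for the positions along the path `B` at which `A i` has neighbours; the
-- windows `[l t, r t]` become subpaths of `B`.
section Attachments

variable {ι : Type*} (T : ι → Set ℕ)

def HasAlignedSubfamily [LinearOrder ι] (α a b : ℕ) : Prop :=
  ∃ a' b', a ≤ a' ∧ a' ≤ b' ∧ b' ≤ b ∧ ∃ g : Fin α → ι, StrictMono g ∧ ∃ l r : Fin α → ℕ,
    (∀ t, a' ≤ l t ∧ l t ≤ r t ∧ r t ≤ b') ∧
    ((∀ t t', t < t' → r t < l t') ∨ ∀ t t', t < t' → r t' < l t) ∧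
    (∀ t, (T (g t) ∩ Set.Icc (l t) (r t)).Nonempty) ∧
    ∀ t, T (g t) ∩ Set.Icc a' b' ⊆ Set.Icc (l t) (r t)

def HasSpreadSubfamily (ρ m a b : ℕ) (F : Finset ι) : Prop :=
  ∃ F' ⊆ F, ρ ≤ #F' ∧ ∃ l r : Fin m → ℕ,
    (∀ t, a ≤ l t ∧ l t ≤ r t ∧ r t ≤ b) ∧
    (∀ t t', t < t' → r t + 1 < l t') ∧
    ∀ i ∈ F', ∀ t, (T i ∩ Set.Icc (l t) (r t)).Nonempty

variable {T}

theorem HasAlignedSubfamily.mono [LinearOrder ι] {α a b a' b' : ℕ}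
    (h : HasAlignedSubfamily T α a' b') (ha : a ≤ a') (hb : b' ≤ b) :
    HasAlignedSubfamily T α a b := by
  obtain ⟨a'', b'', ha', hab, hb', rest⟩ := h
  exact ⟨a'', b'', ha.trans ha', hab, hb'.trans hb, rest⟩

theorem HasSpreadSubfamily.cons {ρ m a c b : ℕ} {F F' : Finset ι}
    (h : HasSpreadSubfamily T ρ m (c + 2) b F') (hF' : F' ⊆ F) (hac : a ≤ c) (hcb : c ≤ b)
    (hleft : ∀ i ∈ F', (T i ∩ Set.Icc a c).Nonempty) :
    HasSpreadSubfamily T ρ (m + 1) a b F := by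
  obtain ⟨G, hGF', hG, l, r, hlr, hgap, htouch⟩ := h
  refine ⟨G, hGF'.trans hF', hG, Fin.cons a l, Fin.cons c r, ?_, ?_, ?_⟩
  · refine Fin.cases ⟨le_rfl, hac, hcb⟩ fun t => ?_
    simp only [Fin.cons_succ]
    have := hlr t
    omega
  · refine Fin.cases (fun t' h => ?_) fun t => Fin.cases (fun h => ?_) fun t' h => ?_
    · cases t' using Fin.cases with
      | zero => exact absurd h (lt_irrefl _)
      | succ t' => simp only [Fin.cons_zero, Fin.cons_succ]; have := hlr t'; omega
    · exact absurd h (Fin.succ_pos t).not_gt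
    · simpa using hgap t t' (Fin.succ_lt_succ_iff.1 h)
  · intro i hi
    exact Fin.cases (hleft i (hGF' hi)) (htouch i hi)

open scoped Classical

theorem hasAlignedSubfamily_or_exists_cut [LinearOrder ι] {α d n a b : ℕ} {F : Finset ι}
    (hα : 1 ≤ α) (hn : 0 < n) (hF : ∀ i ∈ F, (T i ∩ Set.Icc a b).Nonempty)
    (hdeg : ∀ k, #{i ∈ F | k ∈ T i} ≤ d) (hcard : α * α * (n + d) ≤ #F) :
    HasAlignedSubfamily T α a b ∨ ∃ c, ∃ F' ⊆ F, n ≤ #F' ∧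
      ∀ i ∈ F', (T i ∩ Set.Icc a c).Nonempty ∧ (T i ∩ Set.Icc (c + 2) b).Nonempty := by
  obtain ⟨i₀, hi₀⟩ : F.Nonempty :=
    card_pos.1 (lt_of_lt_of_le (Nat.mul_pos (Nat.mul_pos hα hα) (by omega)) hcard)
  have hab : a ≤ b := by obtain ⟨k, -, hk⟩ := hF i₀ hi₀; exact hk.1.trans hk.2
  set lo : ι → ℕ := fun i => sInf (T i ∩ Set.Icc a b)
  set hi : ι → ℕ := fun i => sSup (T i ∩ Set.Icc a b)
  have hbdd : ∀ i, BddAbove (T i ∩ Set.Icc a b) := fun i => ⟨b, fun k hk => hk.2.2⟩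
  have hlo_mem : ∀ i ∈ F, lo i ∈ T i ∩ Set.Icc a b := fun i hi => Nat.sInf_mem (hF i hi)
  have hhi_mem : ∀ i ∈ F, hi i ∈ T i ∩ Set.Icc a b := fun i hi =>
    Nat.sSup_mem (hF i hi) (hbdd i)
  have hspan : ∀ i, T i ∩ Set.Icc a b ⊆ Set.Icc (lo i) (hi i) := fun i k hk =>
    ⟨Nat.sInf_le hk, le_csSup (hbdd i) hk⟩
  have hlohi : ∀ i ∈ F, lo i ≤ hi i := fun i hi => (hspan i (hlo_mem i hi)).2
  rcases exists_pairwise_disjoint_or_exists_piercing lo hi (α * α) F hlohi with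
    ⟨S, hSF, hS, hdisj⟩ | ⟨P, hP, hcov⟩
  · obtain ⟨g, hg, hgS, hord⟩ :=
      exists_strictMono_ordered_of_pairwise_disjoint hα hS.ge (fun i hi => hlohi i (hSF hi)) hdisj
    have hgF : ∀ t, g t ∈ F := fun t => hSF (hgS t)
    refine Or.inl ⟨a, b, le_rfl, hab, le_rfl, g, hg, lo ∘ g, hi ∘ g,
      fun t => ⟨(hlo_mem _ (hgF t)).2.1, hlohi _ (hgF t), (hhi_mem _ (hgF t)).2.2⟩,
      hord, fun t => ⟨_, (hlo_mem _ (hgF t)).1, le_rfl, hlohi _ (hgF t)⟩, fun t => hspan _⟩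
  choose! π hπP hπ using hcov
  obtain ⟨p, -, hp⟩ := exists_le_card_fiber_of_mul_le_card_of_maps_to hπP ⟨_, hπP i₀ hi₀⟩
    ((Nat.mul_le_mul_right _ hP.le).trans hcard)
  -- the members pierced at `p` but not attached at `p` attach on both sides of `p`
  set Fp := {i ∈ F | π i = p}
  refine Or.inr
    ⟨p - 1, {i ∈ Fp | p ∉ T i}, (filter_subset _ _).trans (filter_subset _ _), ?_, ?_⟩
  · have h₁ := card_filter_add_card_filter_not (s := Fp) (fun i => p ∈ T i)
    have h₂ : #{i ∈ Fp | p ∈ T i} ≤ d :=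
      (card_le_card (filter_subset_filter _ (filter_subset _ _))).trans (hdeg p)
    omega
  · intro i hi
    simp only [Fp, mem_filter] at hi
    obtain ⟨⟨hiF, rfl⟩, hpi⟩ := hi
    have hlo := hlo_mem i hiF
    have hhi := hhi_mem i hiF
    have hlo_ne : lo i ≠ π i := fun h => hpi (h ▸ hlo.1)
    have hhi_ne : hi i ≠ π i := fun h => hpi (h ▸ hhi.1)
    have := hπ i hiF
    exact ⟨⟨lo i, hlo.1, hlo.2.1, by omega⟩, ⟨hi i, hhi.1, by omega, hhi.2.2⟩⟩

theorem hasAlignedSubfamily_or_hasSpreadSubfamily [LinearOrder ι] {α d ρ : ℕ}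
    (hα : 1 ≤ α) (hρ : 1 ≤ ρ) (j : ℕ) {a b : ℕ} {F : Finset ι}
    (hF : ∀ i ∈ F, (T i ∩ Set.Icc a b).Nonempty)
    (hdeg : ∀ k, #{i ∈ F | k ∈ T i} ≤ d) (hcard : α ^ (2 * j) * (d * j + ρ) ≤ #F) :
    HasAlignedSubfamily T α a b ∨ HasSpreadSubfamily T ρ (j + 1) a b F := by
  induction j generalizing a b F with
  | zero =>
    have hρF : ρ ≤ #F := by simpa using hcard
    obtain ⟨i, hi⟩ : F.Nonempty := card_pos.1 (by omega)
    obtain ⟨k, -, hk⟩ := hF i hi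
    refine Or.inr ⟨F, subset_rfl, hρF, fun _ => a, fun _ => b,
      fun _ => ⟨le_rfl, hk.1.trans hk.2, le_rfl⟩, fun t t' h => ?_, fun i hi _ => hF i hi⟩
    exact absurd ((Subsingleton.elim (α := Fin 1) t t') ▸ h) (lt_irrefl _)
  | succ j ih =>
    set n := α ^ (2 * j) * (d * j + ρ)
    have hn : 0 < n := Nat.mul_pos (pow_pos hα _) (by omega)
    have hcard' : α * α * (n + d) ≤ #F := calc
      α * α * (n + d) ≤ α * α * (n + α ^ (2 * j) * d) := by
        gcongr; exact Nat.le_mul_of_pos_left _ (pow_pos hα _)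
      _ = α ^ (2 * (j + 1)) * (d * (j + 1) + ρ) := by ring
      _ ≤ #F := hcard
    rcases hasAlignedSubfamily_or_exists_cut hα hn hF hdeg hcard' with h | ⟨c, F', hF'F, hF', hcut⟩
    · exact Or.inl h
    obtain ⟨i, hi⟩ : F'.Nonempty := card_pos.1 (hn.trans_le hF')
    obtain ⟨⟨k, -, hak, hkc⟩, ⟨k', -, hck', hk'b⟩⟩ := hcut i hi
    have hdeg' : ∀ k, #{i ∈ F' | k ∈ T i} ≤ d := fun k =>
      (card_le_card (filter_subset_filter _ hF'F)).trans (hdeg k)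
    rcases ih (fun i hi => (hcut i hi).2) hdeg' hF' with h | h
    · exact Or.inl (h.mono (by omega) le_rfl)
    · exact Or.inr (h.cons hF'F (hak.trans hkc) (by omega) fun i hi => (hcut i hi).1)

end Attachments

section PathNumbering

variable {V : Type u} {G : SimpleGraph V} {S : Set V} {f : V → ℕ} {b : ℕ}

def IsPathNumbering (G : SimpleGraph V) (S : Set V) (f : V → ℕ) (b : ℕ) : Prop :=
  Set.BijOn f S (Set.Iic b) ∧
    ∀ ⦃u⦄, u ∈ S → ∀ ⦃v⦄, v ∈ S → (G.Adj u v ↔ f u + 1 = f v ∨ f v + 1 = f u)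

theorem IsInducedPath.exists_isPathNumbering (h : IsInducedPath G S) :
    ∃ f b, IsPathNumbering G S f b := by
  classical
  obtain ⟨n, hn, ⟨e⟩⟩ := h
  let f : V → ℕ := fun v => if hv : v ∈ S then e ⟨v, hv⟩ else 0
  have hf : ∀ v (hv : v ∈ S), f v = e ⟨v, hv⟩ := fun v hv => dif_pos hv
  refine ⟨f, n - 1, ⟨fun v hv => ?_, fun u hu v hv huv => ?_, fun k hk => ?_⟩, fun u hu v hv => ?_⟩
  · have := (e ⟨v, hv⟩).isLt
    simp only [Set.mem_Iic, hf v hv]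
    omega
  · rw [hf u hu, hf v hv] at huv
    exact congrArg Subtype.val (e.injective (Fin.ext huv))
  · have hk : k < n := by simp only [Set.mem_Iic] at hk; omega
    refine ⟨e.symm ⟨k, hk⟩, (e.symm _).2, ?_⟩
    rw [hf _ (e.symm _).2]
    simp
  · rw [hf u hu, hf v hv, ← pathGraph_adj, e.map_adj_iff, induce_adj]

theorem IsPathNumbering.exists_iso (h : IsPathNumbering G S f b) :
    ∃ e : G.induce S ≃g pathGraph (b + 1), ∀ x, (e x : ℕ) = f x := by
  obtain ⟨hbij, hadj⟩ := h
  let φ : S → Fin (b + 1) := fun x => ⟨f x, Nat.lt_succ_of_le (hbij.mapsTo x.2)⟩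
  have hφ : Function.Bijective φ := by
    refine ⟨fun x y hxy => Subtype.ext (hbij.injOn x.2 y.2 (congrArg Fin.val hxy)), fun k => ?_⟩
    obtain ⟨v, hv, hvk⟩ := hbij.surjOn (Nat.le_of_lt_succ k.2)
    exact ⟨⟨v, hv⟩, Fin.ext hvk⟩
  refine ⟨⟨Equiv.ofBijective φ hφ, fun {x y} => ?_⟩, fun _ => rfl⟩
  simp [φ, pathGraph_adj, hadj x.2 y.2]

theorem IsPathNumbering.isInducedPath (h : IsPathNumbering G S f b) : IsInducedPath G S :=
  let ⟨e, _⟩ := h.exists_iso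
  ⟨b + 1, b.succ_pos, ⟨e⟩⟩

theorem IsInducedPath.connected (h : IsInducedPath G S) : (G.induce S).Connected := by
  obtain ⟨n, hn, ⟨e⟩⟩ := h
  obtain ⟨m, rfl⟩ : ∃ m, n = m + 1 := ⟨n - 1, by omega⟩
  exact e.connected_iff.2 (pathGraph_connected m)

theorem IsPathNumbering.segment (h : IsPathNumbering G S f b) {a c : ℕ} (hac : a ≤ c)
    (hcb : c ≤ b) :
    IsPathNumbering G (S ∩ f ⁻¹' Set.Icc a c) (fun v => f v - a) (c - a) := by
  obtain ⟨hbij, hadj⟩ := h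
  refine ⟨⟨fun v hv => ?_, fun u hu v hv huv => ?_, fun k hk => ?_⟩, fun u hu v hv => ?_⟩
  · have := hv.2.2
    simp only [Set.mem_Iic]
    omega
  · have := hu.2.1; have := hv.2.1
    exact hbij.injOn hu.1 hv.1 (by simp only at huv; omega)
  · simp only [Set.mem_Iic] at hk
    obtain ⟨v, hv, hvk⟩ := hbij.surjOn (show a + k ∈ Set.Iic b by simp only [Set.mem_Iic]; omega)
    exact ⟨v, ⟨hv, by simp only [Set.mem_preimage, Set.mem_Icc]; omega⟩, by simp only; omega⟩
  · have := hu.2.1; have := hv.2.1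
    beta_reduce
    rw [hadj hu.1 hv.1]
    omega

theorem IsPathNumbering.reverse (h : IsPathNumbering G S f b) :
    IsPathNumbering G S (fun v => b - f v) b := by
  obtain ⟨hbij, hadj⟩ := h
  have hle : ∀ v ∈ S, f v ≤ b := fun v hv => hbij.mapsTo hv
  refine ⟨⟨fun v _ => Nat.sub_le _ _, fun u hu v hv huv => ?_, fun k hk => ?_⟩, fun u hu v hv => ?_⟩
  · have := hle u hu; have := hle v hv
    exact hbij.injOn hu hv (by simp only at huv; omega)
  · obtain ⟨v, hv, hvk⟩ := hbij.surjOn (Nat.sub_le b k)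
    simp only [Set.mem_Iic] at hk
    exact ⟨v, hv, by simp only; omega⟩
  · have := hle u hu; have := hle v hv
    beta_reduce
    rw [hadj hu hv]
    omega

theorem IsPathNumbering.anticomplete_segments (h : IsPathNumbering G S f b) {a₁ c₁ a₂ c₂ : ℕ}
    (hgap : c₁ + 1 < a₂ ∨ c₂ + 1 < a₁) :
    Anticomplete G (S ∩ f ⁻¹' Set.Icc a₁ c₁) (S ∩ f ⁻¹' Set.Icc a₂ c₂) := by
  refine ⟨Set.disjoint_left.2 fun v hv₁ hv₂ => ?_, fun u hu v hv huv => ?_⟩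
  · have := hv₁.2.1; have := hv₁.2.2; have := hv₂.2.1; have := hv₂.2.2
    omega
  · have := hu.2.1; have := hu.2.2; have := hv.2.1; have := hv.2.2
    have := (h.2 hu.1 hv.1).1 huv
    omega

theorem IsPathNumbering.aAlignedSingle (h : IsPathNumbering G S f b) {α : ℕ}
    {A : Fin α → Set V} (l r : Fin α → ℕ) (hlr : ∀ t, l t ≤ r t)
    (hord : ∀ t t', t < t' → r t < l t')
    (hal : ∀ t, ∀ x ∈ S, (∃ u ∈ A t, G.Adj x u) → l t ≤ f x ∧ f x ≤ r t) :
    AAlignedSingle G A S := by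
  obtain ⟨e, he⟩ := h.exists_iso
  exact ⟨b + 1, e, l, r, hlr, hord, fun t x hx => he x ▸ hal t x x.2 hx⟩

end PathNumbering

section Models

variable {V : Type u} {G : SimpleGraph V} {B : Set V} {f : V → ℕ}

def nbrPositions (G : SimpleGraph V) (B : Set V) (f : V → ℕ) (X : Set V) : Set ℕ :=
  f '' {v ∈ B | ∃ u ∈ X, G.Adj v u}

theorem touches_of_mem_nbrPositions {X : Set V} {k a c : ℕ} (hk : k ∈ nbrPositions G B f X)
    (ha : a ≤ k) (hc : k ≤ c) : Touches G X (B ∩ f ⁻¹' Set.Icc a c) := by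
  obtain ⟨v, ⟨hvB, u, hu, hvu⟩, rfl⟩ := hk
  exact ⟨u, hu, v, ⟨hvB, ha, hc⟩, hvu.symm⟩

open scoped Classical in
theorem card_filter_mem_nbrPositions_le {ι : Type*} [Finite ι] {A : ι → Set V} {d : ℕ}
    (hf : Set.InjOn f B) (hdeg : ∀ z ∈ B, {i | ∃ u ∈ A i, G.Adj z u}.ncard ≤ d)
    (F : Finset ι) (k : ℕ) : #{i ∈ F | k ∈ nbrPositions G B f (A i)} ≤ d := by
  by_cases hk : ∃ z ∈ B, f z = k
  · obtain ⟨z, hz, rfl⟩ := hk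
    -- `z` is the only vertex of `B` at position `f z`
    have hsub : (↑{i ∈ F | f z ∈ nbrPositions G B f (A i)} : Set ι) ⊆
        {i | ∃ u ∈ A i, G.Adj z u} := by
      intro i hi
      obtain ⟨-, v, ⟨hvB, hvA⟩, hvz⟩ := mem_filter.1 hi
      exact hf hvB hz hvz ▸ hvA
    exact (Set.ncard_coe_finset _).symm.trans_le ((Set.ncard_le_ncard hsub).trans (hdeg z hz))
  · rw [card_eq_zero.2 (filter_eq_empty_iff.2 fun i _ hi => hk ?_)]
    · exact Nat.zero_le _
    · obtain ⟨v, hv, hvk⟩ := hi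
      exact ⟨v, hv.1, hvk⟩

theorem IsBipModel.subfamily {θ ρ σ : ℕ} {A : Fin θ → Set V}
    (hM : IsBipModel G A (fun _ : Fin 1 => B)) {g : Fin ρ → Fin θ} (hg : Function.Injective g)
    {Bm : Fin σ → Set V} (hsub : ∀ j, Bm j ⊆ B) (hconn : ∀ j, (G.induce (Bm j)).Connected)
    (hdisj : Pairwise fun j j' => Disjoint (Bm j) (Bm j'))
    (htouch : ∀ i j, Touches G (A (g i)) (Bm j)) :
    IsBipModel G (fun i => A (g i)) Bm := by
  obtain ⟨hAconn, -, hApair, -, hAB, -⟩ := hM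
  exact ⟨fun i => hAconn _, hconn, fun i i' h => hApair (hg.ne h), hdisj,
    fun i j => (hAB _ 0).mono_right (hsub j), htouch⟩

theorem exists_aligned_of_hasAlignedSubfamily {θ α N : ℕ} {A : Fin θ → Set V}
    (hM : IsBipModel G A (fun _ : Fin 1 => B)) (hB : IsPathNumbering G B f N)
    (h : HasAlignedSubfamily (fun i => nbrPositions G B f (A i)) α 0 N) :
    ∃ g : Fin α → Fin θ, StrictMono g ∧ ∃ B' ⊆ B, IsInducedPath G B' ∧
      IsBipModel G (fun k => A (g k)) (fun _ : Fin 1 => B') ∧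
      AAlignedSingle G (fun k => A (g k)) B' := by
  obtain ⟨a, b, -, hab, hbN, g, hg, l, r, hlr, hord, htouch, hal⟩ := h
  have hB' := hB.segment hab hbN
  have hal' : ∀ t, ∀ x ∈ B ∩ f ⁻¹' Set.Icc a b, (∃ u ∈ A (g t), G.Adj x u) →
      l t ≤ f x ∧ f x ≤ r t := fun t x hx hxu =>
    hal t ⟨⟨x, ⟨hx.1, hxu⟩, rfl⟩, hx.2⟩
  refine ⟨g, hg, _, Set.inter_subset_left, hB'.isInducedPath,
    hM.subfamily hg.injective (fun _ => Set.inter_subset_left)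
      (fun _ => hB'.isInducedPath.connected) (fun j j' h => absurd (Subsingleton.elim j j') h)
      fun t _ => ?_, ?_⟩
  · obtain ⟨k, hk, hlk, hkr⟩ := htouch t
    have := hlr t
    exact touches_of_mem_nbrPositions hk (by omega) (by omega)
  -- in the decreasing case `B'` is numbered from its other end
  rcases hord with hinc | hdec
  · refine hB'.aAlignedSingle (fun t => l t - a) (fun t => r t - a) (fun t => ?_)
      (fun t t' htt' => ?_) fun t x hx hxu => ?_
    · have := hlr t; omega
    · have := hlr t; have := hlr t'; have := hinc t t' htt'; omega
    · have := hal' t x hx hxu; omega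
  · refine hB'.reverse.aAlignedSingle (fun t => b - r t) (fun t => b - l t) (fun t => ?_)
      (fun t t' htt' => ?_) fun t x hx hxu => ?_
    · have := hlr t; omega
    · have := hlr t; have := hlr t'; have := hdec t t' htt'; omega
    · have := hal' t x hx hxu; have := hx.2.1; have := hx.2.2
      omega

theorem exists_spread_of_hasSpreadSubfamily {θ ρ σ N : ℕ} {A : Fin θ → Set V}
    {F : Finset (Fin θ)} (hM : IsBipModel G A (fun _ : Fin 1 => B))
    (hB : IsPathNumbering G B f N)
    (h : HasSpreadSubfamily (fun i => nbrPositions G B f (A i)) ρ σ 0 N F) :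
    ∃ (g : Fin ρ → Fin θ) (Bm : Fin σ → Set V),
      IsBipModel G (fun i => A (g i)) Bm ∧ FamilyInduced G Bm ∧ ∀ j, Bm j ⊆ B := by
  obtain ⟨F', -, hF', l, r, hlr, hgap, htouch⟩ := h
  let g := F'.orderEmbOfCardLe hF'
  have hsep : Pairwise fun t t' =>
      Anticomplete G (B ∩ f ⁻¹' Set.Icc (l t) (r t)) (B ∩ f ⁻¹' Set.Icc (l t') (r t')) :=
    fun t t' h => hB.anticomplete_segments ((lt_or_gt_of_ne h).imp (hgap _ _) (hgap _ _))
  refine ⟨g, fun t => B ∩ f ⁻¹' Set.Icc (l t) (r t),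
    hM.subfamily g.injective (fun _ => Set.inter_subset_left)
      (fun t => (hB.segment (hlr t).2.1 (hlr t).2.2).isInducedPath.connected)
      (fun t t' h => (hsep h).1) fun i t => ?_,
    fun t t' h => (hsep h).2, fun _ => Set.inter_subset_left⟩
  obtain ⟨k, hk, hlk, hkr⟩ := htouch _ (F'.orderEmbOfCardLe_mem hF' i) t
  exact touches_of_mem_nbrPositions hk hlk hkr

end Models

theorem stmt_13_general {V : Type u} (G : SimpleGraph V) (d α ρ σ : ℕ)
    (hα : 1 ≤ α) (hρ : 1 ≤ ρ) (hσ : 1 ≤ σ)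
    (θ : ℕ) (hθ : θ = α ^ (2 * (σ - 1)) * (d * (σ - 1) + ρ))
    (A : Fin θ → Set V) (B : Set V)
    (hM : IsBipModel G A (fun _ : Fin 1 => B))
    (hBlin : IsInducedPath G B)
    (hdeg : ∀ z ∈ B, ({i : Fin θ | ∃ u ∈ A i, G.Adj z u}).ncard ≤ d) :
    (∃ g : Fin α → Fin θ, StrictMono g ∧
      ∃ B' : Set V, B' ⊆ B ∧ IsInducedPath G B' ∧
        IsBipModel G (fun k => A (g k)) (fun _ : Fin 1 => B') ∧
        AAlignedSingle G (fun k => A (g k)) B') ∨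
    ∃ (g : Fin ρ → Fin θ) (Bm : Fin σ → Set V),
      IsBipModel G (fun i => A (g i)) Bm ∧ FamilyInduced G Bm ∧
      ∀ j, Bm j ⊆ B := by
  obtain ⟨s, rfl⟩ : ∃ s, σ = s + 1 := ⟨σ - 1, by omega⟩
  obtain ⟨f, N, hB⟩ := hBlin.exists_isPathNumbering
  have hattach : ∀ i ∈ (univ : Finset (Fin θ)),
      (nbrPositions G B f (A i) ∩ Set.Icc 0 N).Nonempty := fun i _ => by
    obtain ⟨u, hu, v, hv, huv⟩ := hM.2.2.2.2.2 i 0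
    exact ⟨f v, ⟨v, ⟨hv, u, hu, huv.symm⟩, rfl⟩, Nat.zero_le _, hB.1.mapsTo hv⟩
  have hcard : α ^ (2 * s) * (d * s + ρ) ≤ #(univ : Finset (Fin θ)) := by simp [hθ]
  rcases hasAlignedSubfamily_or_hasSpreadSubfamily hα hρ s hattach
      (card_filter_mem_nbrPositions_le hB.1.injOn hdeg univ) hcard with h | h
  · exact Or.inl (exists_aligned_of_hasAlignedSubfamily hM hB h)
  · exact Or.inr (exists_spread_of_hasSpreadSubfamily hM hB h)

theorem stmt_13 {V : Type u} [Fintype V] (G : SimpleGraph V) (d α ρ σ : ℕ)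
    (hd : 1 ≤ d) (hα : 1 ≤ α) (hρ : 1 ≤ ρ) (hσ : 1 ≤ σ)
    (θ : ℕ) (hθ : θ = α ^ (2 * (σ - 1)) * (d * (σ - 1) + ρ))
    (A : Fin θ → Set V) (B : Set V)
    (hM : IsBipModel G A (fun _ : Fin 1 => B))
    (hBlin : IsInducedPath G B)
    (hdeg : ∀ z ∈ B, ({i : Fin θ | ∃ u ∈ A i, G.Adj z u}).ncard ≤ d) :
    (∃ g : Fin α → Fin θ, StrictMono g ∧
      ∃ B' : Set V, B' ⊆ B ∧ IsInducedPath G B' ∧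
        IsBipModel G (fun k => A (g k)) (fun _ : Fin 1 => B') ∧
        AAlignedSingle G (fun k => A (g k)) B') ∨
    ∃ (g : Fin ρ → Fin θ) (Bm : Fin σ → Set V),
      IsBipModel G (fun i => A (g i)) Bm ∧ FamilyInduced G Bm ∧
      ∀ j, Bm j ⊆ B :=
  stmt_13_general G d α ρ σ hα hρ hσ θ hθ A B hM hBlin hdeg
end
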